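/- arXiv:2402.05730 — 9 statements merged into one kernel-verified Lean document; each statement's English description precedes it below -/
import Mathlib

section
/- For non-negative integers n, m, N with 0 < n ≤ m ≤ N, the identity (1/n)·C_N(n,m) = Σ_{b=n}^{m} C_N(n,b)·(1/b) holds, where C_N(n,m) = binom(m,n)/binom(N,n). -/
open Finset

theorem Nat.cast_add_one_choose_div_add_one (b k : ℕ) :
    ((b + 1).choose (k + 1) : ℚ) / (b + 1) = b.choose k / (k + 1) := by
  rw [div_eq_div_iff (by positivity) (by positivity)]
  exact_mod_cast (Nat.add_one_mul_choose_eq b k).symm.trans (Nat.mul_comm _ _)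

-- By absorption each summand is `binom(b-1, n-1) / n`: this is the hockey-stick identity over `n`.
theorem Nat.sum_Icc_choose_div_self {n : ℕ} (hn : 0 < n) (m : ℕ) :
    ∑ b ∈ Icc n m, (b.choose n : ℚ) / b = m.choose n / n := by
  obtain ⟨k, rfl⟩ := Nat.exists_eq_add_one_of_ne_zero hn.ne'
  induction m with
  | zero => simp
  | succ m ih =>
    rcases lt_or_ge (m + 1) (k + 1) with hlt | hle
    · simp [Icc_eq_empty_of_lt hlt, Nat.choose_eq_zero_of_lt hlt]
    · rw [sum_Icc_succ_top hle, ih]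
      push_cast
      rw [Nat.cast_add_one_choose_div_add_one, Nat.choose_succ_succ']
      push_cast
      ring

theorem stmt_1_general (n m N : ℕ) (hn : 0 < n) :
    (1 / (n : ℚ)) * ((m.choose n : ℚ) / (N.choose n : ℚ)) =
    ∑ b ∈ Finset.Icc n m, ((b.choose n : ℚ) / (N.choose n : ℚ)) * (1 / (b : ℚ)) := by
  calc (1 / (n : ℚ)) * ((m.choose n : ℚ) / (N.choose n : ℚ))
      = (∑ b ∈ Icc n m, (b.choose n : ℚ) / b) / N.choose n := by
        rw [Nat.sum_Icc_choose_div_self hn]; ring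
    _ = _ := by
        rw [sum_div]
        exact sum_congr rfl fun b _ => by ring

/-- For `0 < n ≤ m ≤ N`: `(1/n)·C_N(n,m) = Σ_{b=n}^{m} C_N(n,b)·(1/b)`,
where `C_N(n,m) = binom(m,n)/binom(N,n)`. -/
theorem stmt_1 (n m N : ℕ) (hn : 0 < n) (hnm : n ≤ m) (hmN : m ≤ N) :
    (1 / (n : ℚ)) * ((m.choose n : ℚ) / (N.choose n : ℚ)) =
    ∑ b ∈ Finset.Icc n m, ((b.choose n : ℚ) / (N.choose n : ℚ)) * (1 / (b : ℚ)) :=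
  stmt_1_general n m N hn
end

section
/- For non-negative integers n < m ≤ N (with n < a ≤ b < m in the ranges), the identity Σ_{a=n+1}^{m} (1/a)·C_N(a,m) = Σ_{b=n}^{m−1} C_N(n,b)·(1/(N−b)) holds, where C_N(n,m) = binom(m,n)/binom(N,n) and m ≤ N−1 (so N−b > 0). -/
/-!
Induction on `m`. Pascal's rule and `C(m, a - 1) / a = C(m + 1, a) / (m + 1)` turn the increment
of the left side into `(m + 1)⁻¹ ∑_{a > n} C(m + 1, a) / C(N, a)`. Since
`C(m + 1, a) / C(N, a) = C(N - a, N - m - 1) / C(N, m + 1)`, that sum is a hockey-stick sum, and it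
evaluates to the new term `C(m, n) / (C(N, n) (N - m))` of the right side.
-/

open Finset

namespace Nat

theorem choose_mul_choose_eq_choose_mul_choose_sub {a M N : ℕ} (haM : a ≤ M) (hMN : M ≤ N) :
    N.choose M * M.choose a = N.choose a * (N - a).choose (N - M) := by
  rw [choose_mul haM, choose_symm_of_eq_add (show N - a = (M - a) + (N - M) by omega)]

theorem add_one_mul_choose_mul_choose_add_one {n m N : ℕ} (hnm : n ≤ m) (hmN : m ≤ N) :
    (m + 1) * m.choose n * N.choose (m + 1) = (N - m) * N.choose n * (N - n).choose (N - m) :=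
  calc (m + 1) * m.choose n * N.choose (m + 1)
      = m.choose n * (N.choose (m + 1) * (m + 1)) := by ring
    _ = (N - m) * (N.choose m * m.choose n) := by rw [choose_succ_right_eq]; ring
    _ = (N - m) * N.choose n * (N - n).choose (N - m) := by
      rw [choose_mul_choose_eq_choose_mul_choose_sub hnm hmN, mul_assoc]

theorem sum_Icc_choose_sub_choose_sub {n M N : ℕ} (hnM : n < M) (hMN : M ≤ N) :
    ∑ a ∈ Icc (n + 1) M, (N - a).choose (N - M) = (N - n).choose (N + 1 - M) := by
  have hreflect : ∑ a ∈ Icc (n + 1) M, (N - a).choose (N - M) =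
      ∑ i ∈ Icc (N - M) (N - n - 1), i.choose (N - M) :=
    sum_nbij' (N - ·) (N - ·) (by intro a; simp only [mem_Icc]; omega)
      (by intro i; simp only [mem_Icc]; omega) (by intro a; simp only [mem_Icc]; omega)
      (by intro i; simp only [mem_Icc]; omega) (fun _ _ => rfl)
  rw [hreflect, sum_Icc_choose]
  congr 1 <;> omega

end Nat

variable {K : Type*} [Field K] [CharZero K]

theorem cast_choose_div_cast_choose {a M N : ℕ} (haM : a ≤ M) (hMN : M ≤ N) :
    (M.choose a : K) / N.choose a = (N - a).choose (N - M) / N.choose M := by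
  have hNa : (N.choose a : K) ≠ 0 := by exact_mod_cast (Nat.choose_pos (haM.trans hMN)).ne'
  have hNM : (N.choose M : K) ≠ 0 := by exact_mod_cast (Nat.choose_pos hMN).ne'
  rw [div_eq_div_iff hNa hNM]
  have h := congrArg (Nat.cast (R := K)) (Nat.choose_mul_choose_eq_choose_mul_choose_sub haM hMN)
  push_cast at h
  linear_combination h

theorem sum_Icc_cast_choose_div_cast_choose {n M N : ℕ} (hnM : n < M) (hMN : M ≤ N) :
    ∑ a ∈ Icc (n + 1) M, (M.choose a : K) / N.choose a =
      (N - n).choose (N + 1 - M) / N.choose M := by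
  rw [sum_congr rfl fun a ha => cast_choose_div_cast_choose (mem_Icc.1 ha).2 hMN, ← sum_div,
    ← Nat.cast_sum, Nat.sum_Icc_choose_sub_choose_sub hnM hMN]

theorem one_div_mul_cast_choose_add_one {m a : ℕ} (ha : 0 < a) :
    1 / (a : K) * (m + 1).choose a = 1 / a * m.choose a + 1 / (m + 1 : K) * (m + 1).choose a := by
  obtain ⟨b, rfl⟩ : ∃ b, a = b + 1 := ⟨a - 1, by omega⟩
  have hpascal : ((m + 1).choose (b + 1) : K) = m.choose b + m.choose (b + 1) := by
    exact_mod_cast Nat.choose_succ_succ' m b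
  have habsorb : ((m + 1 : ℕ) : K) * m.choose b = (m + 1).choose (b + 1) * (b + 1 : ℕ) := by
    exact_mod_cast Nat.add_one_mul_choose_eq m b
  push_cast at habsorb ⊢
  field_simp
  linear_combination (m + 1 : K) * hpascal + habsorb

theorem one_div_mul_cast_choose_sub_div_cast_choose {n m N : ℕ} (hnm : n ≤ m) (hmN : m < N) :
    1 / (m + 1 : K) * ((N - n).choose (N - m) / N.choose (m + 1)) =
      m.choose n / N.choose n * (1 / ((N : K) - m)) := by
  have hNm : (N : K) - m ≠ 0 := sub_ne_zero.2 (by exact_mod_cast hmN.ne')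
  have hNn : (N.choose n : K) ≠ 0 := by exact_mod_cast (Nat.choose_pos (by omega)).ne'
  have hNm1 : (N.choose (m + 1) : K) ≠ 0 := by exact_mod_cast (Nat.choose_pos hmN).ne'
  have h := congrArg (Nat.cast (R := K)) (Nat.add_one_mul_choose_mul_choose_add_one hnm hmN.le)
  push_cast [Nat.cast_sub hmN.le] at h
  field_simp
  linear_combination -h

theorem sum_Icc_one_div_mul_cast_choose_div_cast_choose {n m N : ℕ} (hnm : n ≤ m)
    (hmN : m ≤ N) :
    ∑ a ∈ Icc (n + 1) m, (1 / (a : K)) * ((m.choose a : K) / N.choose a) =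
      ∑ b ∈ Ico n m, ((b.choose n : K) / N.choose n) * (1 / ((N : K) - b)) := by
  induction m, hnm using Nat.le_induction with
  | base => simp
  | succ m hnm ih =>
    have hpascal : ∀ a ∈ Icc (n + 1) (m + 1),
        1 / (a : K) * ((m + 1).choose a / N.choose a) =
          1 / (a : K) * (m.choose a / N.choose a) +
            1 / (m + 1 : K) * ((m + 1).choose a / N.choose a) := by
      intro a ha
      rw [← mul_div_assoc,
        one_div_mul_cast_choose_add_one ((Nat.succ_pos n).trans_le (mem_Icc.1 ha).1),
        add_div, mul_div_assoc, mul_div_assoc]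
    have htop : ∑ a ∈ Icc (n + 1) (m + 1), 1 / (a : K) * (m.choose a / N.choose a) =
        ∑ a ∈ Icc (n + 1) m, 1 / (a : K) * (m.choose a / N.choose a) := by
      simp [sum_Icc_succ_top (Nat.succ_le_succ hnm)]
    rw [sum_congr rfl hpascal, sum_add_distrib, htop, ih (by omega), ← mul_sum,
      sum_Icc_cast_choose_div_cast_choose (by omega) hmN, sum_Ico_succ_top hnm,
      Nat.add_sub_add_right, one_div_mul_cast_choose_sub_div_cast_choose hnm hmN]

/-- For `0 ≤ n < m < N`:
`Σ_{a=n+1}^{m} (1/a)·C_N(a,m) = Σ_{b=n}^{m−1} C_N(n,b)·(1/(N−b))`,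
where `C_N(n,m) = binom(m,n)/binom(N,n)`. -/
theorem stmt_2 (n m N : ℕ) (hnm : n < m) (hmN : m < N) :
    ∑ a ∈ Finset.Icc (n + 1) m, (1 / (a : ℚ)) * ((m.choose a : ℚ) / (N.choose a : ℚ)) =
    ∑ b ∈ Finset.Icc n (m - 1),
      ((b.choose n : ℚ) / (N.choose n : ℚ)) * (1 / ((N : ℚ) - (b : ℚ))) := by
  rw [Icc_sub_one_right_eq_Ico_of_not_isMin (by simpa using hnm.ne_bot)]
  exact sum_Icc_one_div_mul_cast_choose_div_cast_choose hnm.le hmN.le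
end

section
/- For every positive integer N, ζ_{<N}(3) := Σ_{0<n<N} 1/n^3 equals Σ_{0<n_1≤n_2≤n_3<N} 1/((N−n_1) n_2 n_3). -/
open Finset
def Hq (M : ℕ) : ℚ := ∑ n ∈ Icc 1 M, (1:ℚ)/n
def Pq (M : ℕ) : ℚ := ∑ n ∈ Icc 1 M, (1:ℚ)/(n:ℚ)^2
def P3 (M : ℕ) : ℚ := ∑ n ∈ Icc 1 M, (1:ℚ)/(n:ℚ)^3

lemma Hq_succ (M : ℕ) : Hq (M+1) = Hq M + 1/((M:ℚ)+1) := by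
  unfold Hq; rw [Finset.sum_Icc_succ_top (by omega)]; push_cast; ring
lemma Pq_succ (M : ℕ) : Pq (M+1) = Pq M + 1/((M:ℚ)+1)^2 := by
  unfold Pq; rw [Finset.sum_Icc_succ_top (by omega)]; push_cast; ring
lemma P3_succ (M : ℕ) : P3 (M+1) = P3 M + 1/((M:ℚ)+1)^3 := by
  unfold P3; rw [Finset.sum_Icc_succ_top (by omega)]; push_cast; ring

lemma Ioo_eq (N : ℕ) : Finset.Ioo 0 N = Finset.Icc 1 (N-1) := by
  ext x; simp only [Finset.mem_Ioo, Finset.mem_Icc]; omega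

lemma sum_reflect (N : ℕ) (f : ℕ → ℚ) :
    ∑ j ∈ Finset.Ioo 0 N, f (N - j) = ∑ j ∈ Finset.Ioo 0 N, f j := by
  refine Finset.sum_nbij' (fun j => N - j) (fun j => N - j) ?_ ?_ ?_ ?_ ?_ <;>
    intro a ha <;> simp only [Finset.mem_Ioo] at ha ⊢ <;> omega

lemma sumA (M : ℕ) : ∑ j ∈ Icc 1 M, Hq (j-1)/(j:ℚ) = (Hq M^2 - Pq M)/2 := by
  induction M with
  | zero => simp [Hq, Pq]
  | succ M ih =>
    rw [Finset.sum_Icc_succ_top (by omega), ih, Hq_succ, Pq_succ]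
    simp only [Nat.add_sub_cancel]
    have h : ((M:ℚ)+1) ≠ 0 := by positivity
    push_cast
    field_simp
    ring

lemma split_uv (N : ℕ) (g : ℕ → ℚ) :
    ∑ j ∈ Ioo 0 N, g j / ((j:ℚ) * ((N-j:ℕ):ℚ)) =
    (1/(N:ℚ)) * ((∑ j ∈ Ioo 0 N, g j / (j:ℚ)) + ∑ j ∈ Ioo 0 N, g j / ((N-j:ℕ):ℚ)) := by
  rw [← Finset.sum_add_distrib, Finset.mul_sum]
  apply Finset.sum_congr rfl
  intro j hj
  simp only [Finset.mem_Ioo] at hj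
  have hj0 : (j:ℚ) ≠ 0 := Nat.cast_ne_zero.mpr (by omega)
  have hNj : ((N-j:ℕ):ℚ) ≠ 0 := Nat.cast_ne_zero.mpr (by omega)
  have hN : (N:ℚ) ≠ 0 := Nat.cast_ne_zero.mpr (by omega)
  have hadd : (j:ℚ) + ((N-j:ℕ):ℚ) = (N:ℚ) := by rw [← Nat.cast_add]; congr 1; omega
  field_simp
  linear_combination (-g j) * hadd

lemma sum_inv_Ioo (N : ℕ) : ∑ j ∈ Ioo 0 N, (1:ℚ)/(j:ℚ) = Hq (N-1) := by
  rw [Ioo_eq]; rfl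

lemma sumA' (N : ℕ) : ∑ j ∈ Ioo 0 N, Hq (j-1)/(j:ℚ) = (Hq (N-1)^2 - Pq (N-1))/2 := by
  rw [Ioo_eq]; exact sumA _

lemma sumU4 (N : ℕ) : ∑ j ∈ Ioo 0 N, (1:ℚ)/((j:ℚ) * ((N-j:ℕ):ℚ)) =
    (1/(N:ℚ)) * (Hq (N-1) + Hq (N-1)) := by
  have h := split_uv N (fun _ => (1:ℚ))
  rw [h, sum_inv_Ioo]
  congr 2
  have hr := sum_reflect N (fun j => (1:ℚ)/(j:ℚ))
  rw [hr]; exact sum_inv_Ioo N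

lemma sumU5 (N : ℕ) : ∑ j ∈ Ioo 0 N, Hq (j-1)/((j:ℚ) * ((N-j:ℕ):ℚ)) =
    (1/(N:ℚ)) * ((Hq (N-1)^2 - Pq (N-1))/2 + ∑ j ∈ Ioo 0 N, Hq (N-1-j)/(j:ℚ)) := by
  have h := split_uv N (fun j => Hq (j-1))
  rw [h, sumA']
  congr 2
  have hr := sum_reflect N (fun j => Hq (j-1)/((N-j:ℕ):ℚ))
  rw [← hr]
  apply Finset.sum_congr rfl
  intro j hj
  simp only [Finset.mem_Ioo] at hj
  have h1 : N - j - 1 = N - 1 - j := by omega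
  have h2 : N - (N - j) = j := by omega
  rw [h1, h2]

lemma sumC (N : ℕ) : ∑ j ∈ Ioo 0 N, Hq (N-1-j) / (j:ℚ) = Hq (N-1)^2 - Pq (N-1) := by
  induction N with
  | zero => simp [Hq, Pq]
  | succ N ih =>
    rcases Nat.eq_zero_or_pos N with h0 | hN
    · subst h0; simp [Hq, Pq]
    have hins : Finset.Ioo 0 (N+1) = insert N (Finset.Ioo 0 N) := by
      ext x; simp only [Finset.mem_Ioo, Finset.mem_insert]; omega
    rw [hins, Finset.sum_insert (by simp)]
    simp only [Nat.add_sub_cancel, Nat.sub_self]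
    have hstep : ∀ j ∈ Finset.Ioo 0 N, Hq (N-j)/(j:ℚ) =
        Hq (N-1-j)/(j:ℚ) + 1/((j:ℚ) * ((N-j:ℕ):ℚ)) := by
      intro j hj
      simp only [Finset.mem_Ioo] at hj
      have h1 : N - j = (N-1-j) + 1 := by omega
      have h2 : ((N-1-j:ℕ):ℚ) + 1 = ((N-j:ℕ):ℚ) := by
        rw [h1]; push_cast; ring
      rw [h1, Hq_succ, h2]
      have hj0 : (j:ℚ) ≠ 0 := Nat.cast_ne_zero.mpr (by omega)
      have hNj : ((N-j:ℕ):ℚ) ≠ 0 := Nat.cast_ne_zero.mpr (by omega)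
      field_simp
      push_cast
      linear_combination h2
    rw [Finset.sum_congr rfl hstep, Finset.sum_add_distrib, ih, sumU4]
    have hHq0 : Hq 0 = 0 := by simp [Hq]
    have hN1 : N - 1 + 1 = N := by omega
    have hNcast : ((N-1:ℕ):ℚ) + 1 = (N:ℚ) := by
      conv_rhs => rw [← hN1]
      push_cast; ring
    have hHqN : Hq N = Hq (N-1) + 1/(N:ℚ) := by
      conv_lhs => rw [← hN1]
      rw [Hq_succ, hNcast]
    have hPqN : Pq N = Pq (N-1) + 1/(N:ℚ)^2 := by
      conv_lhs => rw [← hN1]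
      rw [Pq_succ, hNcast]
    rw [hHq0, hHqN, hPqN]
    have hNq : (N:ℚ) ≠ 0 := Nat.cast_ne_zero.mpr (by omega)
    field_simp
    ring

lemma Fmain (N : ℕ) :
    ∑ j ∈ Ioo 0 N, (Hq (N-1) - Hq (N-1-j)) * (Hq (N-1) - Hq (j-1)) / (j:ℚ) = P3 (N-1) := by
  induction N with
  | zero => simp [P3]
  | succ N ih =>
    rcases Nat.eq_zero_or_pos N with h0 | hN
    · subst h0; simp [Hq, P3]
    have hins : Finset.Ioo 0 (N+1) = insert N (Finset.Ioo 0 N) := by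
      ext x; simp only [Finset.mem_Ioo, Finset.mem_insert]; omega
    rw [hins, Finset.sum_insert (by simp)]
    simp only [Nat.add_sub_cancel, Nat.sub_self]
    have hN1 : N - 1 + 1 = N := by omega
    have hNq : (N:ℚ) ≠ 0 := Nat.cast_ne_zero.mpr (by omega)
    have hNcast : ((N-1:ℕ):ℚ) + 1 = (N:ℚ) := by
      conv_rhs => rw [← hN1]
      push_cast; ring
    have hHqN : Hq N = Hq (N-1) + 1/(N:ℚ) := by
      conv_lhs => rw [← hN1]
      rw [Hq_succ, hNcast]
    have hP3N : P3 N = P3 (N-1) + 1/(N:ℚ)^3 := by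
      conv_lhs => rw [← hN1]
      rw [P3_succ, hNcast]
    have hHq0 : Hq 0 = 0 := by simp [Hq]
    -- pointwise decomposition
    have hstep : ∀ j ∈ Finset.Ioo 0 N,
        (Hq N - Hq (N-j)) * (Hq N - Hq (j-1)) / (j:ℚ) =
        (Hq (N-1) - Hq (N-1-j)) * (Hq (N-1) - Hq (j-1)) / (j:ℚ)
          + (2*(1/(N:ℚ))*Hq (N-1) + (1/(N:ℚ))^2) * ((1:ℚ)/(j:ℚ))
          - (1/(N:ℚ)) * (Hq (N-1-j)/(j:ℚ))
          - (1/(N:ℚ)) * (Hq (j-1)/(j:ℚ))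
          - (Hq (N-1) + 1/(N:ℚ)) * ((1:ℚ)/((j:ℚ) * ((N-j:ℕ):ℚ)))
          + Hq (j-1)/((j:ℚ) * ((N-j:ℕ):ℚ)) := by
      intro j hj
      simp only [Finset.mem_Ioo] at hj
      have h1 : N - j = (N-1-j) + 1 := by omega
      have hj0 : (j:ℚ) ≠ 0 := Nat.cast_ne_zero.mpr (by omega)
      rw [hHqN, h1, Hq_succ]
      push_cast
      have hw : ((N-1-j:ℕ):ℚ) + 1 ≠ 0 := by positivity
      field_simp
      ring
    rw [Finset.sum_congr rfl hstep]
    simp only [Finset.sum_add_distrib, Finset.sum_sub_distrib, ← Finset.mul_sum]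
    rw [ih, sumC, sumA', sum_inv_Ioo, sumU4, sumU5, sumC, hHqN, hP3N, hHq0]
    field_simp
    ring

lemma sum_Icc_inv (a b : ℕ) (ha : 1 ≤ a) (hab : a ≤ b + 1) :
    ∑ n ∈ Icc a b, (1:ℚ)/(n:ℚ) = Hq b - Hq (a-1) := by
  have hIoc : ∀ M : ℕ, Hq M = ∑ n ∈ Ioc 0 M, (1:ℚ)/(n:ℚ) := by
    intro M; unfold Hq; apply Finset.sum_congr _ (fun _ _ => rfl)
    ext x; simp only [Finset.mem_Icc, Finset.mem_Ioc]; omega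
  have hab' : Icc a b = Ioc (a-1) b := by
    ext x; simp only [Finset.mem_Icc, Finset.mem_Ioc]; omega
  rw [hab', hIoc, hIoc,
    ← Finset.sum_Ioc_consecutive (fun n : ℕ => (1:ℚ)/(n:ℚ)) (Nat.zero_le (a-1)) (by omega : a-1 ≤ b)]
  ring

lemma swap_lemma (N : ℕ) (f : ℕ → ℕ → ℚ) :
    ∑ m ∈ Ioo 0 N, ∑ n2 ∈ Icc (N-m) (N-1), f m n2
    = ∑ n2 ∈ Ioo 0 N, ∑ m ∈ Icc (N-n2) (N-1), f m n2 := by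
  have e1 : ∀ m ∈ Ioo 0 N, ∑ n2 ∈ Icc (N-m) (N-1), f m n2
      = ∑ n2 ∈ Ioo 0 N, if N ≤ m + n2 then f m n2 else 0 := by
    intro m hm; simp only [Finset.mem_Ioo] at hm
    rw [← Finset.sum_filter]
    apply Finset.sum_congr _ (fun _ _ => rfl)
    ext x; simp only [Finset.mem_filter, Finset.mem_Ioo, Finset.mem_Icc]; omega
  have e2 : ∀ n2 ∈ Ioo 0 N, ∑ m ∈ Icc (N-n2) (N-1), f m n2
      = ∑ m ∈ Ioo 0 N, if N ≤ m + n2 then f m n2 else 0 := by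
    intro n2 hn2; simp only [Finset.mem_Ioo] at hn2
    rw [← Finset.sum_filter]
    apply Finset.sum_congr _ (fun _ _ => rfl)
    ext x; simp only [Finset.mem_filter, Finset.mem_Ioo, Finset.mem_Icc]; omega
  rw [Finset.sum_congr rfl e1, Finset.sum_congr rfl e2, Finset.sum_comm]

lemma innerprod (N n2 : ℕ) (h0 : 0 < n2) (h2 : n2 < N) :
    ∑ m ∈ Icc (N-n2) (N-1), ∑ n3 ∈ Icc n2 (N-1), (1:ℚ)/((m:ℚ)*(n2:ℚ)*(n3:ℚ))
    = (Hq (N-1) - Hq (N-1-n2)) * (Hq (N-1) - Hq (n2-1)) / (n2:ℚ) := by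
  have hm : ∑ m ∈ Icc (N-n2) (N-1), (1:ℚ)/(m:ℚ) = Hq (N-1) - Hq (N-1-n2) := by
    rw [sum_Icc_inv _ _ (by omega) (by omega)]
    congr 2
    omega
  have hn3 : ∑ n3 ∈ Icc n2 (N-1), (1:ℚ)/(n3:ℚ) = Hq (N-1) - Hq (n2-1) :=
    sum_Icc_inv _ _ (by omega) (by omega)
  have hfac : ∀ x y z : ℚ, 1/(x*y*z) = (1/x)*(1/z)*(1/y) := by
    intros x y z
    rw [one_div, mul_inv, mul_inv, one_div, one_div, one_div]
    ring
  calc ∑ m ∈ Icc (N-n2) (N-1), ∑ n3 ∈ Icc n2 (N-1), (1:ℚ)/((m:ℚ)*(n2:ℚ)*(n3:ℚ))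
      = ∑ m ∈ Icc (N-n2) (N-1), ∑ n3 ∈ Icc n2 (N-1),
          ((1:ℚ)/(m:ℚ))*((1:ℚ)/(n3:ℚ))*((1:ℚ)/(n2:ℚ)) := by
        apply Finset.sum_congr rfl; intro m _
        apply Finset.sum_congr rfl; intro n3 _
        exact hfac _ _ _
    _ = (∑ m ∈ Icc (N-n2) (N-1), (1:ℚ)/(m:ℚ)) * (∑ n3 ∈ Icc n2 (N-1), (1:ℚ)/(n3:ℚ))
          * ((1:ℚ)/(n2:ℚ)) := by
        rw [Finset.sum_mul_sum]
        rw [Finset.sum_mul]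
        apply Finset.sum_congr rfl; intro m _
        rw [Finset.sum_mul]
    _ = (Hq (N-1) - Hq (N-1-n2)) * (Hq (N-1) - Hq (n2-1)) / (n2:ℚ) := by
        rw [hm, hn3]; ring

/-- `ζ_{<N}(3) = Σ_{0<n₁≤n₂≤n₃<N} 1/((N−n₁)·n₂·n₃)`. -/
theorem stmt_5 (N : ℕ) (hN : 0 < N) :
    ∑ n ∈ Finset.Ioo 0 N, (1 : ℚ) / (n : ℚ) ^ 3 =
    ∑ n1 ∈ Finset.Ioo 0 N, ∑ n2 ∈ Finset.Icc n1 (N - 1), ∑ n3 ∈ Finset.Icc n2 (N - 1),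
      (1 : ℚ) / (((N : ℚ) - (n1 : ℚ)) * (n2 : ℚ) * (n3 : ℚ)) := by
  have hL : ∑ n ∈ Ioo 0 N, (1:ℚ)/(n:ℚ)^3 = P3 (N-1) := by rw [Ioo_eq]; rfl
  have h1 : ∀ n1 ∈ Ioo 0 N,
      (∑ n2 ∈ Icc n1 (N-1), ∑ n3 ∈ Icc n2 (N-1),
        (1:ℚ)/(((N:ℚ)-(n1:ℚ))*(n2:ℚ)*(n3:ℚ)))
      = (fun m => ∑ n2 ∈ Icc (N-m) (N-1), ∑ n3 ∈ Icc n2 (N-1),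
          (1:ℚ)/(((m:ℕ):ℚ)*(n2:ℚ)*(n3:ℚ))) (N - n1) := by
    intro n1 hn1; simp only [Finset.mem_Ioo] at hn1
    simp only []
    have hr : N - (N - n1) = n1 := by omega
    rw [hr]
    apply Finset.sum_congr rfl; intro n2 _
    apply Finset.sum_congr rfl; intro n3 _
    rw [Nat.cast_sub (le_of_lt hn1.2)]
  rw [hL, Finset.sum_congr rfl h1, sum_reflect N
    (fun m => ∑ n2 ∈ Icc (N-m) (N-1), ∑ n3 ∈ Icc n2 (N-1),
      (1:ℚ)/(((m:ℕ):ℚ)*(n2:ℚ)*(n3:ℚ))), swap_lemma N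
    (fun m n2 => ∑ n3 ∈ Icc n2 (N-1), (1:ℚ)/((m:ℚ)*(n2:ℚ)*(n3:ℚ)))]
  rw [Finset.sum_congr rfl (fun n2 hn2 => by
    simp only [Finset.mem_Ioo] at hn2
    exact innerprod N n2 hn2.1 hn2.2)]
  exact (Fmain N).symm
end

section
/- For every positive integer N, the truncated double zeta value ζ_{<N}(1,2) := Σ_{0<n_1<n_2<N} 1/(n_1 n_2^2) equals Σ_{0<m_1<m_2≤m_3<N} 1/((N−m_1)(N−m_2) m_3). -/
/-!
Reflecting `m₁ = N - n₂`, `m₂ = N - n₁`, `m₃ = N - i` turns the right-hand side into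
`∑_{0<n₁<n₂<N} T_N(n₁) / (n₁ n₂)` with `T_N(n) = ∑_{i=1}^{n} 1/(N - i)` (`tailHarmonic N n`).
This is compared with `ζ_{<N}(1,2)` by induction on `N`. Passing to `N + 1` changes `T_N(n)` by
`1/N - 1/(N - n)`; for `0 < n₁ < n₂ < N` these changes contribute `-1/(N (N - n₁) n₂)`, and the
new pairs with `n₂ = N` contribute the same sum with the opposite sign plus `∑_{n<N} 1/(n N²)`,
which is exactly the increment of `ζ_{<N}(1,2)`.
-/

open Finset

section IntervalSums

variable {M : Type*} [AddCommMonoid M] (f : ℕ → M)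

theorem Finset.sum_tsub_reflect {n : ℕ} {s t : Finset ℕ} (hs : ∀ k ∈ s, k ≤ n ∧ n - k ∈ t)
    (ht : ∀ k ∈ t, k ≤ n ∧ n - k ∈ s) : ∑ k ∈ s, f (n - k) = ∑ k ∈ t, f k :=
  sum_nbij' (n - ·) (n - ·) (fun k hk => (hs k hk).2) (fun k hk => (ht k hk).2)
    (fun k hk => Nat.sub_sub_self (hs k hk).1) (fun k hk => Nat.sub_sub_self (ht k hk).1)
    fun _ _ => rfl

theorem Finset.sum_Ioo_tsub_reflect {a b n : ℕ} (hb : b ≤ n) :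
    ∑ k ∈ Ioo a b, f (n - k) = ∑ k ∈ Ioo (n - b) (n - a), f k :=
  sum_tsub_reflect f (fun k hk => by simp only [mem_Ioo] at *; omega)
    (fun k hk => by simp only [mem_Ioo] at *; omega)

theorem Finset.sum_Icc_tsub_reflect {a b n : ℕ} (ha : a ≤ n) (hb : b ≤ n) :
    ∑ k ∈ Icc a b, f (n - k) = ∑ k ∈ Icc (n - b) (n - a), f k :=
  sum_tsub_reflect f (fun k hk => by simp only [mem_Icc] at *; omega)
    (fun k hk => by simp only [mem_Icc] at *; omega)

theorem Finset.sum_Ioo_add_one_right {a b : ℕ} (h : a < b) :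
    ∑ k ∈ Ioo a (b + 1), f k = ∑ k ∈ Ioo a b, f k + f b := by
  rw [Ioo_add_one_right_eq_Ioc, ← Ioo_insert_right h, sum_insert (by simp), add_comm]

end IntervalSums

def tailHarmonic (N n : ℕ) : ℚ := ∑ i ∈ Icc 1 n, 1 / ((N : ℚ) - i)

namespace tailHarmonic

theorem add_one_right (N n : ℕ) :
    tailHarmonic N (n + 1) = tailHarmonic N n + 1 / ((N : ℚ) - (n + 1)) := by
  rw [tailHarmonic, sum_Icc_succ_top (by omega), Nat.cast_add_one]
  rfl

theorem add_one_add_one (N n : ℕ) :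
    tailHarmonic (N + 1) (n + 1) = 1 / (N : ℚ) + tailHarmonic N n := by
  induction n with
  | zero => simp [tailHarmonic]
  | succ n ih =>
    rw [add_one_right, ih, add_one_right]
    push_cast
    ring

theorem add_one_left (N n : ℕ) :
    tailHarmonic (N + 1) n = tailHarmonic N n + 1 / (N : ℚ) - 1 / ((N : ℚ) - n) := by
  cases n with
  | zero => simp [tailHarmonic]
  | succ n =>
    rw [add_one_add_one, add_one_right]
    push_cast
    ring

theorem eq_sum_Ioo_add {N n : ℕ} (hn : 0 < n) :
    tailHarmonic N n = ∑ i ∈ Ioo 0 n, 1 / ((N : ℚ) - i) + 1 / ((N : ℚ) - n) := by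
  rw [tailHarmonic, ← zero_add 1, Icc_add_one_left_eq_Ioc, ← Ioo_insert_right hn,
    sum_insert (by simp), add_comm]

theorem eq_sum_Icc_inv {N m : ℕ} (h : m < N) :
    tailHarmonic N (N - m) = ∑ k ∈ Icc m (N - 1), 1 / (k : ℚ) := by
  have key := sum_Icc_tsub_reflect (fun k => 1 / (k : ℚ)) (by omega : 1 ≤ N) (N.sub_le m)
  rw [Nat.sub_sub_self h.le] at key
  rw [← key, tailHarmonic]
  refine sum_congr rfl fun i hi => ?_
  rw [Nat.cast_sub (by simp only [mem_Icc] at hi; omega)]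

end tailHarmonic

theorem sum_Ioo_Ioo_Icc_eq_sum_tailHarmonic (N : ℕ) :
    ∑ m1 ∈ Ioo 0 N, ∑ m2 ∈ Ioo m1 N, ∑ m3 ∈ Icc m2 (N - 1),
      (1 : ℚ) / (((N : ℚ) - m1) * ((N : ℚ) - m2) * m3) =
    ∑ n2 ∈ Ioo 0 N, ∑ n1 ∈ Ioo 0 n2, tailHarmonic N n1 / (n1 * n2) := by
  calc _ = ∑ m1 ∈ Ioo 0 N, ∑ m2 ∈ Ioo m1 N,
        tailHarmonic N (N - m2) / (((N - m2 : ℕ) : ℚ) * ((N - m1 : ℕ) : ℚ)) := by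
        refine sum_congr rfl fun m1 hm1 => sum_congr rfl fun m2 hm2 => ?_
        simp only [mem_Ioo] at hm1 hm2
        rw [tailHarmonic.eq_sum_Icc_inv hm2.2, sum_div, Nat.cast_sub hm1.2.le,
          Nat.cast_sub hm2.2.le]
        refine sum_congr rfl fun m3 _ => ?_
        rw [div_div]
        congr 1
        ring
    _ = ∑ m1 ∈ Ioo 0 N, ∑ n1 ∈ Ioo 0 (N - m1),
          tailHarmonic N n1 / (n1 * ((N - m1 : ℕ) : ℚ)) := by
        refine sum_congr rfl fun m1 _ => ?_
        rw [sum_Ioo_tsub_reflect (fun n1 => tailHarmonic N n1 / (n1 * ((N - m1 : ℕ) : ℚ))) le_rfl,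
          Nat.sub_self]
    _ = _ := by
        rw [sum_Ioo_tsub_reflect (fun n2 => ∑ n1 ∈ Ioo 0 n2, tailHarmonic N n1 / (n1 * n2)) le_rfl,
          Nat.sub_self, Nat.sub_zero]

theorem sum_sum_tailHarmonic_add_one (N : ℕ) :
    ∑ n2 ∈ Ioo 0 N, ∑ n1 ∈ Ioo 0 n2, tailHarmonic (N + 1) n1 / (n1 * n2) =
      ∑ n2 ∈ Ioo 0 N, ∑ n1 ∈ Ioo 0 n2, tailHarmonic N n1 / (n1 * n2) -
        ∑ n2 ∈ Ioo 0 N, ∑ n1 ∈ Ioo 0 n2, 1 / ((N : ℚ) * (N - n1) * n2) := by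
  simp only [← sum_sub_distrib]
  refine sum_congr rfl fun n2 hn2 => sum_congr rfl fun n1 hn1 => ?_
  simp only [mem_Ioo] at hn1 hn2
  have hn1_ne : (n1 : ℚ) ≠ 0 := Nat.cast_ne_zero.2 (by omega)
  have hN_ne : (N : ℚ) ≠ 0 := Nat.cast_ne_zero.2 (by omega)
  have hNn1_ne : (N : ℚ) - n1 ≠ 0 := sub_ne_zero.2 (by exact_mod_cast (by omega : N ≠ n1))
  rw [tailHarmonic.add_one_left]
  field_simp
  ring

theorem sum_tailHarmonic_add_one_div (N : ℕ) :
    ∑ n ∈ Ioo 0 N, tailHarmonic (N + 1) n / (n * N) =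
      ∑ n2 ∈ Ioo 0 N, ∑ n1 ∈ Ioo 0 n2, 1 / ((N : ℚ) * (N - n1) * n2) +
        ∑ n ∈ Ioo 0 N, 1 / ((n : ℚ) * N ^ 2) := by
  rw [← sum_add_distrib]
  refine sum_congr rfl fun n hn => ?_
  simp only [mem_Ioo] at hn
  rw [tailHarmonic.add_one_left, tailHarmonic.eq_sum_Ioo_add hn.1]
  calc _ = (∑ i ∈ Ioo 0 n, 1 / ((N : ℚ) - i)) / (n * N) + 1 / ((n : ℚ) * N ^ 2) := by ring
    _ = _ := by
      rw [sum_div]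
      congr 1
      refine sum_congr rfl fun i _ => ?_
      rw [div_div]
      congr 1
      ring

theorem sum_sum_tailHarmonic_div_eq_sum_sum_one_div_mul_sq (N : ℕ) :
    ∑ n2 ∈ Ioo 0 N, ∑ n1 ∈ Ioo 0 n2, tailHarmonic N n1 / (n1 * n2) =
      ∑ n2 ∈ Ioo 0 N, ∑ n1 ∈ Ioo 0 n2, (1 : ℚ) / (n1 * n2 ^ 2) := by
  induction N with
  | zero => simp
  | succ N ih =>
    rcases N.eq_zero_or_pos with rfl | hN
    · rfl
    rw [sum_Ioo_add_one_right _ hN, sum_Ioo_add_one_right _ hN, ← ih, sum_sum_tailHarmonic_add_one,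
      sum_tailHarmonic_add_one_div]
    ring

theorem stmt_6_general (N : ℕ) :
    ∑ n2 ∈ Finset.Ioo 0 N, ∑ n1 ∈ Finset.Ioo 0 n2, (1 : ℚ) / ((n1 : ℚ) * (n2 : ℚ) ^ 2) =
    ∑ m1 ∈ Finset.Ioo 0 N, ∑ m2 ∈ Finset.Ioo m1 N, ∑ m3 ∈ Finset.Icc m2 (N - 1),
      (1 : ℚ) / (((N : ℚ) - (m1 : ℚ)) * ((N : ℚ) - (m2 : ℚ)) * (m3 : ℚ)) := by
  rw [sum_Ioo_Ioo_Icc_eq_sum_tailHarmonic, sum_sum_tailHarmonic_div_eq_sum_sum_one_div_mul_sq]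

/-- `ζ_{<N}(1,2) = Σ_{0<m₁<m₂≤m₃<N} 1/((N−m₁)(N−m₂)m₃)`. -/
theorem stmt_6 (N : ℕ) (hN : 0 < N) :
    ∑ n2 ∈ Finset.Ioo 0 N, ∑ n1 ∈ Finset.Ioo 0 n2, (1 : ℚ) / ((n1 : ℚ) * (n2 : ℚ) ^ 2) =
    ∑ m1 ∈ Finset.Ioo 0 N, ∑ m2 ∈ Finset.Ioo m1 N, ∑ m3 ∈ Finset.Icc m2 (N - 1),
      (1 : ℚ) / (((N : ℚ) - (m1 : ℚ)) * ((N : ℚ) - (m2 : ℚ)) * (m3 : ℚ)) :=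
  stmt_6_general N
end

section
/- For every positive integer N, ζ_{<N}(3) − ζ_{<N}(1,2) = Σ_{0<n_1≤n_2<N} 1/((N−n_1)·n_2^2), where ζ_{<N}(3) = Σ_{0<n<N} 1/n^3 and ζ_{<N}(1,2) = Σ_{0<n_1<n_2<N} 1/(n_1 n_2^2). -/
/-!
Write `L(N) = ζ_{<N}(3) - ζ_{<N}(1,2)` and, exchanging the order of summation on the right,
`R(N) = ∑_{0<n<N} g_N(n) / n²` with `g_N(n) = ∑_{0<k≤n} 1/(N-k)`. Both vanish at `N = 1`.
Going from `N` to `N+1`, `L` gains `1/N³ - H_{N-1}/N²`, while `g_N(n)` telescopes to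
`g_N(n) + 1/N - 1/(N-n)` and the new term is `g_{N+1}(N)/N² = H_N/N²`. The two increments agree
by the partial fraction decomposition
`1/(n²(N-n)) = 1/(N n²) + 1/(N² n) + 1/(N² (N-n))` and the symmetry `n ↦ N - n` of `(0, N)`.
-/

open Finset

def truncZeta3 (N : ℕ) : ℚ :=
  ∑ n ∈ Ioo 0 N, 1 / (n : ℚ) ^ 3

def truncZeta12 (N : ℕ) : ℚ :=
  ∑ n2 ∈ Ioo 0 N, ∑ n1 ∈ Ioo 0 n2, 1 / ((n1 : ℚ) * (n2 : ℚ) ^ 2)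

theorem sum_Ioo_succ_top {M : Type*} [AddCommMonoid M] {a b : ℕ} (hab : a < b) (f : ℕ → M) :
    ∑ k ∈ Ioo a (b + 1), f k = ∑ k ∈ Ioo a b, f k + f b := by
  rw [Ioo_add_one_right_eq_Ioc, ← Ioo_insert_right hab, sum_insert (by simp), add_comm]

theorem sum_Ioo_zero_reflect {M R : Type*} [AddCommMonoid M] [AddGroupWithOne R]
    (f : R → M) (N : ℕ) : ∑ k ∈ Ioo 0 N, f (N - k) = ∑ k ∈ Ioo 0 N, f k := by
  refine sum_nbij' (N - ·) (N - ·) ?_ ?_ ?_ ?_ ?_ <;> intro k hk <;> simp only [mem_Ioo] at hk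
  · simp only [mem_Ioo]; omega
  · simp only [mem_Ioo]; omega
  · omega
  · omega
  · rw [Nat.cast_sub hk.2.le]

section Field

variable {K : Type*} [Field K]

theorem sum_Ioc_one_div_succ_sub (N n : ℕ) :
    ∑ k ∈ Ioc 0 n, 1 / ((N + 1 : K) - k) =
      ∑ k ∈ Ioc 0 n, 1 / ((N : K) - k) + 1 / N - 1 / (N - n) := by
  induction n with
  | zero => simp
  | succ n ih =>
    rw [sum_Ioc_succ_top n.zero_le, sum_Ioc_succ_top n.zero_le, ih]
    push_cast
    ring

theorem sum_Ioc_one_div_succ_sub_self (N : ℕ) :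
    ∑ k ∈ Ioc 0 N, 1 / ((N + 1 : K) - k) = ∑ k ∈ Ioc 0 N, 1 / (k : K) := by
  rw [← Ioo_add_one_right_eq_Ioc]
  exact_mod_cast sum_Ioo_zero_reflect (fun x : K => 1 / x) (N + 1)

theorem sum_Ioo_one_div_sq_mul_sub [CharZero K] (N : ℕ) :
    ∑ n ∈ Ioo 0 N, 1 / ((n : K) ^ 2 * (N - n)) =
      (∑ n ∈ Ioo 0 N, 1 / (n : K) ^ 2) / N + 2 * (∑ n ∈ Ioo 0 N, 1 / (n : K)) / N ^ 2 := by
  have partial_fractions : ∀ n ∈ Ioo 0 N, 1 / ((n : K) ^ 2 * (N - n)) =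
      1 / (n : K) ^ 2 / N + 1 / (n : K) / N ^ 2 + 1 / ((N : K) - n) / N ^ 2 := by
    intro n hn
    rw [mem_Ioo] at hn
    have hn0 : (n : K) ≠ 0 := by exact_mod_cast hn.1.ne'
    have hNn : (N : K) - n ≠ 0 := sub_ne_zero.2 (by exact_mod_cast hn.2.ne')
    have hN0 : (N : K) ≠ 0 := by exact_mod_cast (hn.1.trans hn.2).ne'
    field_simp
    ring
  rw [sum_congr rfl partial_fractions, sum_add_distrib, sum_add_distrib, ← sum_div, ← sum_div,
    ← sum_div, sum_Ioo_zero_reflect (fun x : K => 1 / x)]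
  ring

end Field

theorem truncZeta3_succ {N : ℕ} (hN : 0 < N) :
    truncZeta3 (N + 1) = truncZeta3 N + 1 / (N : ℚ) ^ 3 :=
  sum_Ioo_succ_top hN _

theorem truncZeta12_succ {N : ℕ} (hN : 0 < N) :
    truncZeta12 (N + 1) = truncZeta12 N + (∑ n ∈ Ioo 0 N, 1 / (n : ℚ)) / (N : ℚ) ^ 2 := by
  rw [truncZeta12, sum_Ioo_succ_top hN, sum_div]
  congr 2 with n
  rw [div_div]

theorem truncZeta3_sub_truncZeta12 {N : ℕ} (hN : 0 < N) :
    truncZeta3 N - truncZeta12 N =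
      ∑ n ∈ Ioo 0 N, (∑ k ∈ Ioc 0 n, 1 / ((N : ℚ) - k)) / (n : ℚ) ^ 2 := by
  induction N, hN using Nat.le_induction with
  | base => simp [truncZeta3, truncZeta12, show Ioo 0 1 = (∅ : Finset ℕ) from rfl]
  | succ N hN ih =>
    have telescope : ∀ n ∈ Ioo 0 N, (∑ k ∈ Ioc 0 n, 1 / ((N + 1 : ℚ) - k)) / (n : ℚ) ^ 2 =
        (∑ k ∈ Ioc 0 n, 1 / ((N : ℚ) - k)) / (n : ℚ) ^ 2 + 1 / (n : ℚ) ^ 2 / N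
          - 1 / ((n : ℚ) ^ 2 * (N - n)) := by
      intro n hn
      rw [sum_Ioc_one_div_succ_sub, mul_comm ((n : ℚ) ^ 2), ← div_div]
      ring
    have last_column : ∑ k ∈ Ioc 0 N, 1 / ((N + 1 : ℚ) - k) =
        ∑ n ∈ Ioo 0 N, 1 / (n : ℚ) + 1 / N := by
      rw [sum_Ioc_one_div_succ_sub_self, ← Ioo_add_one_right_eq_Ioc, sum_Ioo_succ_top hN]
    push_cast
    rw [truncZeta3_succ hN, truncZeta12_succ hN, sum_Ioo_succ_top hN, sum_congr rfl telescope,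
      sum_sub_distrib, sum_add_distrib, ← sum_div, last_column, sum_Ioo_one_div_sq_mul_sub, ← ih]
    ring

/-- `ζ_{<N}(3) − ζ_{<N}(1,2) = Σ_{0<n₁≤n₂<N} 1/((N−n₁)·n₂²)`. -/
theorem stmt_7 (N : ℕ) (hN : 0 < N) :
    (∑ n ∈ Finset.Ioo 0 N, (1 : ℚ) / (n : ℚ) ^ 3) -
      (∑ n2 ∈ Finset.Ioo 0 N, ∑ n1 ∈ Finset.Ioo 0 n2,
        (1 : ℚ) / ((n1 : ℚ) * (n2 : ℚ) ^ 2)) =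
    ∑ n1 ∈ Finset.Ioo 0 N, ∑ n2 ∈ Finset.Icc n1 (N - 1),
      (1 : ℚ) / (((N : ℚ) - (n1 : ℚ)) * (n2 : ℚ) ^ 2) := by
  change truncZeta3 N - truncZeta12 N = _
  rw [truncZeta3_sub_truncZeta12 hN, sum_comm' (t' := Ioo 0 N) (s' := fun n2 => Ioc 0 n2)
    (fun n1 n2 => by simp only [mem_Ioo, mem_Icc, mem_Ioc]; omega)]
  refine sum_congr rfl fun n2 _ => ?_
  rw [sum_div]
  exact sum_congr rfl fun n1 _ => div_div _ _ _
end

section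
/- ζ(3) = ζ(1,2), i.e., Σ_{n=1}^∞ 1/n^3 = Σ_{0<m<n} 1/(m·n^2) (sum over all pairs of positive integers m < n). -/
/-!
Euler's argument. Let `T = ∑_{a,b ≥ 1} 1/(ab(a+b))`. The partial fraction
`1/(ab(a+b)) = 1/(a(a+b)²) + 1/(b(a+b)²)` and the substitution `(m, n) = (a, a + b)` give
`T = 2 ζ(1,2)`. Summing over `b` first, `1/(ab(a+b)) = a⁻² (1/b - 1/(a+b))` telescopes to
`H_a / a²`, and `H_a = H_{a-1} + 1/a` gives `T = ζ(1,2) + ζ(3)`.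
The sums are taken in `ℝ≥0∞`, where they may be rearranged freely; `ζ(1,2)` is finite since
`1/(mn²) ≤ (mn)^(-3/2)` for `m ≤ n`, so it can be cancelled.
-/

open Finset Filter Topology ENNReal

section PartialFractions

variable {K : Type*} [Field K] {a b : K}

theorem one_div_mul_mul_add_eq_add (ha : a ≠ 0) (hb : b ≠ 0) (hab : a + b ≠ 0) :
    1 / (a * b * (a + b)) = 1 / (a * (a + b) ^ 2) + 1 / (b * (a + b) ^ 2) := by
  field_simp; ring

theorem one_div_mul_mul_add_eq_mul_sub (ha : a ≠ 0) (hb : b ≠ 0) (hab : a + b ≠ 0) :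
    1 / (a * b * (a + b)) = 1 / a ^ 2 * (1 / b - 1 / (a + b)) := by
  field_simp; ring

end PartialFractions

theorem Antitone.hasSum_sub_comp_add {f : ℕ → ℝ} (hf : Antitone f)
    (h0 : Tendsto f atTop (𝓝 0)) (m : ℕ) :
    HasSum (fun k ↦ f k - f (k + m)) (∑ i ∈ range m, f i) := by
  refine (hasSum_iff_tendsto_nat_of_nonneg
    (fun k ↦ sub_nonneg.2 (hf (k.le_add_right m))) _).2 ?_
  have hpartial : ∀ N, ∑ k ∈ range N, (f k - f (k + m)) =
      ∑ i ∈ range m, f i - ∑ i ∈ range m, f (N + i) := by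
    intro N
    have h₁ := sum_range_add f N m
    have h₂ := sum_range_add f m N
    rw [add_comm m N] at h₂
    simp only [sum_sub_distrib, add_comm _ m]
    linarith
  have htail : Tendsto (fun N ↦ ∑ i ∈ range m, f (N + i)) atTop (𝓝 0) := by
    simpa using tendsto_finsetSum (range m) fun i _ ↦ h0.comp (tendsto_add_atTop_nat i)
  simpa [hpartial] using tendsto_const_nhds.sub htail

theorem hasSum_one_div_sub_one_div_add (m : ℕ) :
    HasSum (fun k : ℕ ↦ 1 / ((k : ℝ) + 1) - 1 / ((k : ℝ) + 1 + m)) (harmonic m) := by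
  have hanti : Antitone fun k : ℕ ↦ 1 / ((k : ℝ) + 1) := fun i j hij ↦ by dsimp only; gcongr
  convert hanti.hasSum_sub_comp_add tendsto_one_div_add_atTop_nhds_zero_nat m using 1
  · ext k; push_cast; ring_nf
  · simp [harmonic]

theorem rpow_three_halves_mul_le {x y : ℝ} (hx : 0 ≤ x) (hxy : x ≤ y) :
    x ^ (3 / 2 : ℝ) * y ^ (3 / 2 : ℝ) ≤ x * y ^ 2 := by
  have hy : 0 ≤ y := hx.trans hxy
  have h32 : ∀ {t : ℝ}, 0 ≤ t → t ^ (3 / 2 : ℝ) = t * √t := fun ht ↦ by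
    rw [show (3 / 2 : ℝ) = 1 + 1 / 2 by norm_num, Real.rpow_add' ht (by norm_num),
      Real.rpow_one, Real.sqrt_eq_rpow]
  calc x ^ (3 / 2 : ℝ) * y ^ (3 / 2 : ℝ) = x * √x * (y * √y) := by rw [h32 hx, h32 hy]
    _ ≤ x * √y * (y * √y) := by gcongr
    _ = x * y ^ 2 := by rw [mul_mul_mul_comm, mul_assoc, Real.mul_self_sqrt hy]; ring

abbrev PosLtPairs : Type := {p : ℕ × ℕ // 0 < p.1 ∧ p.1 < p.2}

theorem summable_one_div_mul_sq_of_lt :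
    Summable fun p : PosLtPairs ↦ 1 / ((p.val.1 : ℝ) * (p.val.2 : ℝ) ^ 2) := by
  set g : ℕ → ℝ := fun n ↦ 1 / (n : ℝ) ^ (3 / 2 : ℝ)
  have hg : Summable g := Real.summable_one_div_nat_rpow.2 (by norm_num)
  have hprod : Summable fun x : ℕ × ℕ ↦ g x.1 * g x.2 :=
    hg.mul_of_nonneg hg (fun _ ↦ by positivity) (fun _ ↦ by positivity)
  refine (hprod.comp_injective Subtype.val_injective).of_nonneg_of_le (fun _ ↦ by positivity) ?_
  rintro ⟨⟨m, n⟩, hm, hmn⟩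
  simp only [g, Function.comp_apply, one_div_mul_one_div]
  have hm' : (0 : ℝ) < m := by exact_mod_cast hm
  have hn' : (0 : ℝ) < n := by exact_mod_cast hm.trans hmn
  exact one_div_le_one_div_of_le (by positivity)
    (rpow_three_halves_mul_le hm'.le (by exact_mod_cast hmn.le))

def prodEquivPosLtPairs : ℕ × ℕ ≃ PosLtPairs where
  toFun x := ⟨(x.1 + 1, x.1 + x.2 + 2), by omega⟩
  invFun p := (p.val.1 - 1, p.val.2 - p.val.1 - 1)
  left_inv := by rintro ⟨a, b⟩; simp only [Prod.mk.injEq]; omega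
  right_inv := by rintro ⟨⟨m, n⟩, h⟩; ext <;> dsimp only <;> omega

def sigmaFinEquivPosLtPairs : (Σ n : ℕ, Fin n) ≃ PosLtPairs where
  toFun x := ⟨(x.2 + 1, x.1 + 1), by omega⟩
  invFun p := ⟨p.val.2 - 1, p.val.1 - 1, by omega⟩
  left_inv := by rintro ⟨n, i⟩; rfl
  right_inv := by rintro ⟨⟨m, n⟩, h⟩; ext <;> dsimp only <;> omega

noncomputable def zeta12 : ℝ≥0∞ :=
  ∑' p : PosLtPairs, ENNReal.ofReal (1 / ((p.val.1 : ℝ) * (p.val.2 : ℝ) ^ 2))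

noncomputable def zeta3 : ℝ≥0∞ := ∑' n : ℕ, ENNReal.ofReal (1 / ((n : ℝ) + 1) ^ 3)

noncomputable def eulerSum : ℝ≥0∞ :=
  ∑' x : ℕ × ℕ, ENNReal.ofReal
    (1 / (((x.1 : ℝ) + 1) * ((x.2 : ℝ) + 1) * (((x.1 : ℝ) + 1) + ((x.2 : ℝ) + 1))))

theorem zeta12_eq_tsum_prod : zeta12 = ∑' x : ℕ × ℕ,
    ENNReal.ofReal (1 / (((x.1 : ℝ) + 1) * (((x.1 : ℝ) + 1) + ((x.2 : ℝ) + 1)) ^ 2)) := by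
  rw [zeta12, ← prodEquivPosLtPairs.tsum_eq]
  refine tsum_congr fun x ↦ ?_
  simp only [prodEquivPosLtPairs, Equiv.coe_fn_mk]
  push_cast
  ring_nf

theorem eulerSum_eq_zeta12_add_zeta12 : eulerSum = zeta12 + zeta12 := by
  nth_rw 2 [zeta12_eq_tsum_prod]
  rw [← (Equiv.prodComm ℕ ℕ).tsum_eq, zeta12_eq_tsum_prod, ← ENNReal.tsum_add, eulerSum]
  refine tsum_congr fun x ↦ ?_
  simp only [Equiv.prodComm_apply, Prod.fst_swap, Prod.snd_swap]
  rw [← ENNReal.ofReal_add (by positivity) (by positivity), add_comm ((x.2 : ℝ) + 1),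
    one_div_mul_mul_add_eq_add (by positivity) (by positivity) (by positivity)]

theorem tsum_ofReal_one_div_mul_mul_add (a : ℕ) :
    ∑' b : ℕ, ENNReal.ofReal
        (1 / (((a : ℝ) + 1) * ((b : ℝ) + 1) * (((a : ℝ) + 1) + ((b : ℝ) + 1)))) =
      ENNReal.ofReal (harmonic (a + 1) / ((a : ℝ) + 1) ^ 2) := by
  have hs : HasSum (fun b : ℕ ↦
      1 / (((a : ℝ) + 1) * ((b : ℝ) + 1) * (((a : ℝ) + 1) + ((b : ℝ) + 1))))
      (harmonic (a + 1) / ((a : ℝ) + 1) ^ 2) := by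
    have h := (hasSum_one_div_sub_one_div_add (a + 1)).mul_left (1 / ((a : ℝ) + 1) ^ 2)
    rw [one_div_mul_eq_div] at h
    refine h.congr_fun fun b ↦ ?_
    rw [one_div_mul_mul_add_eq_mul_sub (by positivity) (by positivity) (by positivity)]
    push_cast
    ring
  rw [← ENNReal.ofReal_tsum_of_nonneg (fun _ ↦ by positivity) hs.summable, hs.tsum_eq]

theorem eulerSum_eq_tsum_harmonic :
    eulerSum = ∑' a : ℕ, ENNReal.ofReal (harmonic (a + 1) / ((a : ℝ) + 1) ^ 2) := by
  rw [eulerSum, ENNReal.tsum_prod']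
  exact tsum_congr tsum_ofReal_one_div_mul_mul_add

theorem ofReal_harmonic_succ_div_sq (a : ℕ) :
    ENNReal.ofReal (harmonic (a + 1) / ((a : ℝ) + 1) ^ 2) =
      ∑' i : Fin a, ENNReal.ofReal (1 / ((((i : ℕ) : ℝ) + 1) * ((a : ℝ) + 1) ^ 2)) +
        ENNReal.ofReal (1 / ((a : ℝ) + 1) ^ 3) := by
  rw [tsum_fintype, Fin.sum_univ_eq_sum_range
      (fun i ↦ ENNReal.ofReal (1 / (((i : ℝ) + 1) * ((a : ℝ) + 1) ^ 2))),
    ← ENNReal.ofReal_sum_of_nonneg (fun _ _ ↦ by positivity),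
    ← ENNReal.ofReal_add (by positivity) (by positivity), harmonic_succ, harmonic]
  congr 1
  push_cast
  rw [add_div, sum_div]
  congr 1
  · exact sum_congr rfl fun i _ ↦ by field_simp
  · field_simp

theorem tsum_harmonic_eq_zeta12_add_zeta3 :
    ∑' a : ℕ, ENNReal.ofReal (harmonic (a + 1) / ((a : ℝ) + 1) ^ 2) = zeta12 + zeta3 := by
  rw [tsum_congr ofReal_harmonic_succ_div_sq, ENNReal.tsum_add,
    ← ENNReal.tsum_sigma' fun x : (Σ n : ℕ, Fin n) ↦
      ENNReal.ofReal (1 / ((((x.2 : ℕ) : ℝ) + 1) * ((x.1 : ℝ) + 1) ^ 2)),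
    zeta12, ← sigmaFinEquivPosLtPairs.tsum_eq, zeta3]
  congr 1
  refine tsum_congr fun x ↦ ?_
  simp only [sigmaFinEquivPosLtPairs, Equiv.coe_fn_mk]
  push_cast
  rfl

theorem zeta12_ne_top : zeta12 ≠ ∞ := summable_one_div_mul_sq_of_lt.tsum_ofReal_ne_top

theorem zeta12_eq_zeta3 : zeta12 = zeta3 := by
  have h := eulerSum_eq_zeta12_add_zeta12.symm.trans
    (eulerSum_eq_tsum_harmonic.trans tsum_harmonic_eq_zeta12_add_zeta3)
  exact (ENNReal.add_right_inj zeta12_ne_top).1 h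

theorem tsum_eq_toReal_tsum_ofReal {ι : Type*} {f : ι → ℝ} (hf : ∀ i, 0 ≤ f i) :
    ∑' i, f i = (∑' i, ENNReal.ofReal (f i)).toReal := by
  rw [ENNReal.tsum_toReal_eq fun _ ↦ ENNReal.ofReal_ne_top]
  exact tsum_congr fun i ↦ (ENNReal.toReal_ofReal (hf i)).symm

/-- `ζ(3) = ζ(1,2)`: `Σ_{n≥1} 1/n³ = Σ_{0<m<n} 1/(m·n²)`. -/
theorem stmt_8 :
    ∑' n : ℕ, (1 : ℝ) / ((n : ℝ) + 1) ^ 3 =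
    ∑' p : {p : ℕ × ℕ // 0 < p.1 ∧ p.1 < p.2},
      (1 : ℝ) / ((p.val.1 : ℝ) * (p.val.2 : ℝ) ^ 2) := by
  rw [tsum_eq_toReal_tsum_ofReal fun _ ↦ by positivity,
    tsum_eq_toReal_tsum_ofReal fun _ ↦ by positivity]
  exact congrArg ENNReal.toReal zeta12_eq_zeta3.symm
end

section
/- For every positive integer N, ζ_{<N}(2) := Σ_{0<n<N} 1/n^2 equals Σ_{0<n_1≤n_2<N} 1/((N−n_1)·n_2). -/
/-!
With `M = N - 1` and `n₁ = k + 1`, the inner sum on the right is `H_M - H_k`, so the right side is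
`H_M ^ 2 - C_M` where `C_M = ∑_{k<M} H_k / (M - k)`. Going from `M` to `M + 1`, `H_M ^ 2` grows by
`2 H_M / (M + 1) + 1 / (M + 1) ^ 2`, while `C_M` grows by `∑_{k<M} 1 / ((k + 1) (M - k))`, which is
`2 H_M / (M + 1)` by partial fractions. Hence `H_M ^ 2 - C_M` grows by exactly `1 / (M + 1) ^ 2`.
-/

open Finset

lemma sum_range_inv_sub_eq_harmonic (M : ℕ) :
    ∑ k ∈ range M, ((M : ℚ) - k)⁻¹ = harmonic M := by
  rw [harmonic, ← sum_range_reflect]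
  refine sum_congr rfl fun k hk => ?_
  rw [mem_range] at hk
  rw [Nat.sub_sub, Nat.cast_sub (by omega : 1 + k ≤ M)]
  push_cast
  ring

lemma sum_range_inv_mul_sub (M : ℕ) :
    ∑ k ∈ range M, (((k : ℚ) + 1) * (M - k))⁻¹ = 2 * harmonic M / (M + 1) := by
  have partial_fractions : ∀ k ∈ range M,
      (((k : ℚ) + 1) * (M - k))⁻¹ = (((k : ℚ) + 1)⁻¹ + ((M : ℚ) - k)⁻¹) / (M + 1) := by
    intro k hk
    have hkM : (k : ℚ) < M := by exact_mod_cast mem_range.mp hk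
    field_simp [sub_ne_zero.mpr hkM.ne']
    ring
  rw [sum_congr rfl partial_fractions, ← sum_div, sum_add_distrib,
    sum_range_inv_sub_eq_harmonic, harmonic]
  push_cast
  ring

/-- `harmonicConv M = ∑_{j, l ≥ 1, j + l ≤ M} 1 / (j l)`. -/
def harmonicConv (M : ℕ) : ℚ := ∑ k ∈ range M, harmonic k / ((M : ℚ) - k)

lemma harmonicConv_succ (M : ℕ) :
    harmonicConv (M + 1) = harmonicConv M + 2 * harmonic M / (M + 1) := by
  rw [harmonicConv, sum_range_succ', harmonic_zero, zero_div, add_zero, ← sum_range_inv_mul_sub,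
    harmonicConv, ← sum_add_distrib]
  refine sum_congr rfl fun k _ => ?_
  rw [harmonic_succ, mul_inv]
  push_cast
  ring

lemma harmonic_sq_sub_harmonicConv (M : ℕ) :
    harmonic M ^ 2 - harmonicConv M = ∑ k ∈ range M, 1 / ((k : ℚ) + 1) ^ 2 := by
  induction M with
  | zero => simp [harmonicConv]
  | succ M ih =>
    rw [harmonic_succ, harmonicConv_succ, sum_range_succ, ← ih, one_div, ← inv_pow]
    push_cast
    ring

lemma sum_range_harmonic_sub_div (M : ℕ) :
    ∑ k ∈ range M, (harmonic M - harmonic k) / ((M : ℚ) - k) =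
      ∑ k ∈ range M, 1 / ((k : ℚ) + 1) ^ 2 := by
  simp only [sub_div, sum_sub_distrib, div_eq_mul_inv (harmonic M), ← mul_sum,
    sum_range_inv_sub_eq_harmonic]
  rw [← sq, ← harmonic_sq_sub_harmonicConv, harmonicConv]

lemma sum_Ioo_zero_add_one {β : Type*} [AddCommMonoid β] (M : ℕ) (f : ℕ → β) :
    ∑ n ∈ Ioo 0 (M + 1), f n = ∑ k ∈ range M, f (k + 1) := by
  rw [← Ico_add_one_left_eq_Ioo, range_eq_Ico, sum_Ico_add']

lemma sum_Icc_inv_eq_harmonic_sub {k M : ℕ} (h : k ≤ M) :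
    ∑ i ∈ Icc (k + 1) M, (i : ℚ)⁻¹ = harmonic M - harmonic k := by
  have Icc_one : ∀ n, Icc 1 n = Ioc 0 n := Icc_add_one_left_eq_Ioc 0
  rw [harmonic_eq_sum_Icc, harmonic_eq_sum_Icc, Icc_one, Icc_one, Icc_add_one_left_eq_Ioc,
    ← sum_Ioc_consecutive _ (Nat.zero_le k) h, add_sub_cancel_left]

theorem stmt_9_general (N : ℕ) :
    ∑ n ∈ Finset.Ioo 0 N, (1 : ℚ) / (n : ℚ) ^ 2 =
    ∑ n1 ∈ Finset.Ioo 0 N, ∑ n2 ∈ Finset.Icc n1 (N - 1),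
      (1 : ℚ) / (((N : ℚ) - (n1 : ℚ)) * (n2 : ℚ)) := by
  cases N with
  | zero => simp
  | succ M =>
    rw [sum_Ioo_zero_add_one, sum_Ioo_zero_add_one, Nat.add_sub_cancel]
    push_cast
    rw [← sum_range_harmonic_sub_div]
    refine sum_congr rfl fun k hk => ?_
    rw [← sum_Icc_inv_eq_harmonic_sub (mem_range.mp hk).le, div_eq_mul_inv, sum_mul]
    refine sum_congr rfl fun i _ => ?_
    rw [one_div, mul_inv]
    ring

/-- `ζ_{<N}(2) = Σ_{0<n₁≤n₂<N} 1/((N−n₁)·n₂)`. -/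
theorem stmt_9 (N : ℕ) (hN : 0 < N) :
    ∑ n ∈ Finset.Ioo 0 N, (1 : ℚ) / (n : ℚ) ^ 2 =
    ∑ n1 ∈ Finset.Ioo 0 N, ∑ n2 ∈ Finset.Icc n1 (N - 1),
      (1 : ℚ) / (((N : ℚ) - (n1 : ℚ)) * (n2 : ℚ)) :=
  stmt_9_general N
end

section
/- Let k be a positive integer and N a positive integer. Then Σ_{0<n<N} 1/n^k = Σ_{0<n_1≤n_2≤···≤n_k<N} 1/((N−n_1)·n_2···n_k), where the right-hand sum is over weakly increasing k-tuples of integers in (0,N). -/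
open Finset

/-!
Write `N = M + 1`. For `t ≤ M`, the sum of `1 / ((M + 1 - n₁) n₂ ⋯ n_k)` over
`1 ≤ n₁ ≤ ⋯ ≤ n_k ≤ t` equals `∑_{1 ≤ m ≤ M} C(t, m) / (m ^ k C(M, m))`, by induction on `k`
after splitting off the largest index `n_k`. For `k = 1` this follows by induction on `t`: Pascal's
rule reduces it to `∑_m C(t, m - 1) / (m C(M, m)) = 1 / (M - t)`, whose summands telescope as
`(C(t, m - 1) / C(M, m - 1) - C(t, m) / C(M, m)) / (M - t)`. Each further index costs a factor
`1 / m`, by the weighted hockey stick `∑_{n ≤ t} C(n, m) / n = C(t, m) / m`. At `t = M` the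
binomials cancel and what remains is `∑ 1 / m ^ k`.
-/

lemma Fin.prod_univ_erase_zero {β : Type*} [CommMonoid β] {n : ℕ} (f : Fin (n + 1) → β) :
    ∏ i ∈ univ.erase 0, f i = ∏ i : Fin n, f i.succ := by
  rw [Fin.univ_succ, erase_cons, prod_map]
  rfl

section MonotoneTuples

variable {α : Type*} [LinearOrder α]

lemma Fin.monotone_snoc_iff {j : ℕ} {g : Fin j → α} {x : α} :
    Monotone (Fin.snoc g x : Fin (j + 1) → α) ↔ Monotone g ∧ ∀ i, g i ≤ x := by
  refine ⟨fun h => ⟨fun a b hab => ?_, fun i => ?_⟩, fun ⟨hg, hx⟩ a b hab => ?_⟩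
  · simpa using h (Fin.castSucc_le_castSucc_iff.2 hab)
  · simpa using h (Fin.le_last i.castSucc)
  · cases a using Fin.lastCases <;> cases b using Fin.lastCases
    · simp
    · simp [← Fin.not_lt, Fin.castSucc_lt_last] at hab
    · simpa using hx _
    · simpa using hg (Fin.castSucc_le_castSucc_iff.1 hab)

variable [LocallyFiniteOrder α]

def monotoneTuples (j : ℕ) (a b : α) : Finset (Fin j → α) :=
  (Fintype.piFinset fun _ => Icc a b).filter Monotone

lemma mem_monotoneTuples {j : ℕ} {a b : α} {f : Fin j → α} :
    f ∈ monotoneTuples j a b ↔ (∀ i, f i ∈ Icc a b) ∧ Monotone f := by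
  simp [monotoneTuples]

lemma snoc_mem_monotoneTuples {j : ℕ} {a b x : α} {g : Fin j → α} :
    Fin.snoc g x ∈ monotoneTuples (j + 1) a b ↔ x ∈ Icc a b ∧ g ∈ monotoneTuples j a x := by
  simp only [mem_monotoneTuples, Fin.forall_fin_succ', Fin.snoc_castSucc, Fin.snoc_last,
    Fin.monotone_snoc_iff, mem_Icc]
  constructor
  · rintro ⟨⟨hg, hx⟩, hmono, hgx⟩
    exact ⟨hx, fun i => ⟨(hg i).1, hgx i⟩, hmono⟩
  · rintro ⟨hx, hg, hmono⟩
    exact ⟨⟨fun i => ⟨(hg i).1, (hg i).2.trans hx.2⟩, hx⟩, hmono, fun i => (hg i).2⟩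

lemma sum_monotoneTuples_succ {β : Type*} [AddCommMonoid β] (j : ℕ) (a b : α)
    (F : (Fin (j + 1) → α) → β) :
    ∑ f ∈ monotoneTuples (j + 1) a b, F f =
      ∑ x ∈ Icc a b, ∑ g ∈ monotoneTuples j a x, F (Fin.snoc g x) := by
  rw [sum_sigma']
  refine sum_bij' (fun f _ => ⟨f (Fin.last j), Fin.init f⟩) (fun p _ => Fin.snoc p.2 p.1)
    (fun f hf => ?_) (fun p hp => ?_) (fun f _ => Fin.snoc_init_self f) (fun p _ => ?_)
    (fun f _ => by rw [Fin.snoc_init_self])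
  · rw [← Fin.snoc_init_self f, snoc_mem_monotoneTuples] at hf
    simpa using hf
  · exact snoc_mem_monotoneTuples.2 (mem_sigma.1 hp)
  · simp

end MonotoneTuples

lemma Nat.cast_choose_succ_right_eq {R : Type*} [CommRing R] (t m : ℕ) :
    (t.choose (m + 1) : R) * (m + 1) = t.choose m * (t - m) := by
  rcases le_or_gt m t with h | h
  · have := congrArg (Nat.cast : ℕ → R) (Nat.choose_succ_right_eq t m)
    push_cast [Nat.cast_sub h] at this
    exact this
  · simp [Nat.choose_eq_zero_of_lt h, Nat.choose_eq_zero_of_lt (by omega : t < m + 1)]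

section Binomial

variable {K : Type*} [Field K] [CharZero K]

lemma sum_Icc_choose_succ_div (t m : ℕ) :
    ∑ n ∈ Icc 1 t, (n.choose (m + 1) : K) / n = t.choose (m + 1) / (m + 1) := by
  induction t with
  | zero => simp
  | succ t ih =>
    have hpascal : ((t + 1).choose (m + 1) : K) = t.choose m + t.choose (m + 1) := by
      exact_mod_cast Nat.choose_succ_succ t m
    have habsorb : ((t + 1).choose (m + 1) : K) * (m + 1) = (t + 1) * t.choose m := by
      exact_mod_cast (Nat.add_one_mul_choose_eq t m).symm
    rw [sum_Icc_succ_top (by omega), ih]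
    push_cast
    field_simp
    linear_combination habsorb - (t + 1 : K) * hpascal

lemma sum_Icc_choose_pred_div (t M : ℕ) (ht : t < M) :
    ∑ m ∈ Icc 1 M, (t.choose (m - 1) : K) / (m * M.choose m) = 1 / ((M : K) - t) := by
  have hMt : (M : K) - t ≠ 0 := sub_ne_zero.2 (by exact_mod_cast ht.ne')
  set r : ℕ → K := fun m => t.choose m / M.choose m
  have hterm : ∀ m ∈ range M,
      (t.choose m : K) / ((1 + m : ℕ) * M.choose (1 + m)) = (r m - r (m + 1)) / ((M : K) - t) := by
    intro m hm
    have hmM : m < M := mem_range.1 hm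
    have hA : (M.choose m : K) ≠ 0 := by exact_mod_cast (Nat.choose_pos hmM.le).ne'
    have hMm : (M : K) - m ≠ 0 := sub_ne_zero.2 (by exact_mod_cast hmM.ne')
    have hm1 : (m : K) + 1 ≠ 0 := Nat.cast_add_one_ne_zero m
    have hM := eq_div_of_mul_eq hm1 (Nat.cast_choose_succ_right_eq (R := K) M m)
    have ht' := eq_div_of_mul_eq hm1 (Nat.cast_choose_succ_right_eq (R := K) t m)
    simp only [r, add_comm 1 m, hM, ht']
    push_cast
    field_simp
    ring
  rw [← Ico_add_one_right_eq_Icc, sum_Ico_eq_sum_range, Nat.add_sub_cancel]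
  simp only [Nat.add_sub_cancel_left]
  rw [sum_congr rfl hterm, ← sum_div, sum_range_sub']
  simp [r, Nat.choose_eq_zero_of_lt ht]

lemma sum_Icc_one_div_sub_eq_sum_choose (M t : ℕ) (ht : t ≤ M) :
    ∑ n ∈ Icc 1 t, 1 / ((M : K) + 1 - n) = ∑ m ∈ Icc 1 M, (t.choose m : K) / (m * M.choose m) := by
  induction t with
  | zero =>
    refine (sum_eq_zero fun m hm => ?_).symm
    simp [Nat.choose_eq_zero_of_lt (mem_Icc.1 hm).1]
  | succ t ih =>
    have hpascal : ∀ m ∈ Icc 1 M, ((t + 1).choose m : K) / (m * M.choose m) =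
        t.choose (m - 1) / (m * M.choose m) + t.choose m / (m * M.choose m) := by
      intro m hm
      rw [Nat.choose_succ_left t m (mem_Icc.1 hm).1, Nat.cast_add, add_div]
    rw [sum_congr rfl hpascal, sum_add_distrib, sum_Icc_choose_pred_div t M (by omega),
      ← ih (by omega), sum_Icc_succ_top (by omega)]
    push_cast
    ring

lemma sum_monotoneTuples_eq_sum_choose (M j t : ℕ) (ht : t ≤ M) :
    ∑ f ∈ monotoneTuples (j + 1) 1 t, 1 / ((M : K) + 1 - f 0) * ∏ i : Fin j, 1 / (f i.succ : K) =
      ∑ m ∈ Icc 1 M, (t.choose m : K) / (m ^ (j + 1) * M.choose m) := by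
  induction j generalizing t with
  | zero =>
    simp only [sum_monotoneTuples_succ, Nat.zero_add, pow_one]
    rw [← sum_Icc_one_div_sub_eq_sum_choose M t ht]
    refine sum_congr rfl fun x _ => ?_
    simp [monotoneTuples, Subsingleton.monotone]
    rfl
  | succ j ih =>
    have hsnoc : ∀ (g : Fin (j + 1) → ℕ) (x : ℕ),
        1 / ((M : K) + 1 - (Fin.snoc g x : Fin (j + 2) → ℕ) 0) *
            ∏ i : Fin (j + 1), 1 / ((Fin.snoc g x : Fin (j + 2) → ℕ) i.succ : K) =
          1 / (x : K) * (1 / ((M : K) + 1 - g 0) * ∏ i : Fin j, 1 / (g i.succ : K)) := by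
      intro g x
      rw [Fin.prod_univ_castSucc]
      simp only [← Fin.castSucc_zero, Fin.succ_castSucc, Fin.snoc_castSucc, Fin.succ_last,
        Fin.snoc_last]
      ring
    rw [sum_monotoneTuples_succ]
    simp only [hsnoc, ← mul_sum]
    calc ∑ x ∈ Icc 1 t, 1 / (x : K) * ∑ g ∈ monotoneTuples (j + 1) 1 x,
            1 / ((M : K) + 1 - g 0) * ∏ i : Fin j, 1 / (g i.succ : K)
        = ∑ x ∈ Icc 1 t, 1 / (x : K) *
            ∑ m ∈ Icc 1 M, (x.choose m : K) / (m ^ (j + 1) * M.choose m) :=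
          sum_congr rfl fun x hx => by rw [ih x ((mem_Icc.1 hx).2.trans ht)]
      _ = ∑ m ∈ Icc 1 M, 1 / ((m : K) ^ (j + 1) * M.choose m) *
            ∑ x ∈ Icc 1 t, (x.choose m : K) / x := by
          simp only [mul_sum]
          rw [sum_comm]
          exact sum_congr rfl fun m _ => sum_congr rfl fun x _ => by ring
      _ = ∑ m ∈ Icc 1 M, (t.choose m : K) / (m ^ (j + 2) * M.choose m) := by
          refine sum_congr rfl fun m hm => ?_
          obtain ⟨m, rfl⟩ := Nat.exists_eq_add_of_le' (mem_Icc.1 hm).1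
          rw [sum_Icc_choose_succ_div]
          push_cast
          simp only [div_eq_mul_inv, mul_inv, pow_succ]
          ring

end Binomial

/-- Depth-1 discretization: `Σ_{0<n<N} 1/n^k = Σ_{0<n₁≤⋯≤n_k<N} 1/((N−n₁)·n₂⋯n_k)`. -/
theorem stmt_10 (N k : ℕ) (hN : 0 < N) (hk : 0 < k) :
    ∑ n ∈ Finset.Ioo 0 N, (1 : ℚ) / (n : ℚ) ^ k =
    ∑ f ∈ (Fintype.piFinset fun _ : Fin k => Finset.Ioo 0 N).filter Monotone,
      (1 / ((N : ℚ) - (f ⟨0, hk⟩ : ℚ))) *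
        ∏ i ∈ Finset.univ.erase (⟨0, hk⟩ : Fin k), (1 : ℚ) / (f i : ℚ) := by
  obtain ⟨M, rfl⟩ := Nat.exists_eq_add_of_le' hN
  obtain ⟨j, rfl⟩ := Nat.exists_eq_add_of_le' hk
  have hIoo : Ioo 0 (M + 1) = Icc 1 M := by
    ext n
    simp only [mem_Ioo, mem_Icc]
    omega
  have main := sum_monotoneTuples_eq_sum_choose (K := ℚ) M j M le_rfl
  simp only [monotoneTuples, ← hIoo] at main
  simp only [Fin.mk_zero, Fin.prod_univ_erase_zero, Nat.cast_add_one, main]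
  refine sum_congr rfl fun m hm => ?_
  have hC : (M.choose m : ℚ) ≠ 0 := by
    exact_mod_cast (Nat.choose_pos (mem_Icc.1 (hIoo ▸ hm)).2).ne'
  field_simp
end

section
/- For every prime p, Σ_{0<n_1≤n_2≤n_3<p} 1/((N−n_1) n_2 n_3) with N = p is congruent mod p to −Σ_{0<m_1≤m_2≤m_3<p} 1/(m_1 m_2 m_3); equivalently, ζ_{<p}(3) ≡ −(ζ_{<p}(3) + ζ_{<p}(1,2) + ζ_{<p}(2,1) + ζ_{<p}(1,1,1)) (mod p) for p > 3, where ζ_{<p}(k_1,…,k_r) = Σ_{0<n_1<⋯<n_r<p} 1/(n_1^{k_1}⋯n_r^{k_r}). -/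
open Finset

lemma filt1 {N a : ℕ} (ha : 0 < a) :
    (Finset.Ioo 0 N).filter (fun b => a < b) = Finset.Ioo a N := by
  ext b; simp only [mem_filter, mem_Ioo]; omega

lemma filt2 {N b : ℕ} (hb : b < N) :
    (Finset.Ioo 0 N).filter (fun a => a < b) = Finset.Ioo 0 b := by
  ext a; simp only [mem_filter, mem_Ioo]; omega

lemma tri_swap {M : Type*} [AddCommMonoid M] (N : ℕ) (f : ℕ → ℕ → M) :
    ∑ a ∈ Finset.Ioo 0 N, ∑ b ∈ Finset.Ioo a N, f a b
      = ∑ b ∈ Finset.Ioo 0 N, ∑ a ∈ Finset.Ioo 0 b, f a b := by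
  calc ∑ a ∈ Finset.Ioo 0 N, ∑ b ∈ Finset.Ioo a N, f a b
      = ∑ a ∈ Finset.Ioo 0 N, ∑ b ∈ Finset.Ioo 0 N, if a < b then f a b else 0 := by
        refine Finset.sum_congr rfl fun a ha => ?_
        rw [← Finset.sum_filter, filt1 (Finset.mem_Ioo.mp ha).1]
    _ = ∑ b ∈ Finset.Ioo 0 N, ∑ a ∈ Finset.Ioo 0 N, if a < b then f a b else 0 :=
        Finset.sum_comm
    _ = ∑ b ∈ Finset.Ioo 0 N, ∑ a ∈ Finset.Ioo 0 b, f a b := by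
        refine Finset.sum_congr rfl fun b hb => ?_
        rw [← Finset.sum_filter, filt2 (Finset.mem_Ioo.mp hb).2]

lemma point_split {M : Type*} [AddCommMonoid M] {l N a : ℕ} (h1 : l < a) (h2 : a < N)
    (g : ℕ → M) :
    ∑ b ∈ Finset.Ioo l N, g b
      = (∑ b ∈ Finset.Ioo l a, g b) + g a + ∑ b ∈ Finset.Ioo a N, g b := by
  have hu : Finset.Ioo l N = Finset.Ioo l a ∪ insert a (Finset.Ioo a N) := by
    ext x; simp only [Finset.mem_union, Finset.mem_insert, Finset.mem_Ioo]; omega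
  have hd : Disjoint (Finset.Ioo l a) (insert a (Finset.Ioo a N)) := by
    simp only [Finset.disjoint_left, Finset.mem_insert, Finset.mem_Ioo]
    rintro x hx; omega
  rw [hu, Finset.sum_union hd, Finset.sum_insert (by simp), add_assoc]

lemma double_split {M : Type*} [AddCommMonoid M] (N : ℕ) (f : ℕ → ℕ → M) :
    ∑ a ∈ Finset.Ioo 0 N, ∑ b ∈ Finset.Ioo 0 N, f a b
      = (∑ b ∈ Finset.Ioo 0 N, ∑ a ∈ Finset.Ioo 0 b, f a b)
        + (∑ a ∈ Finset.Ioo 0 N, f a a)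
        + (∑ a ∈ Finset.Ioo 0 N, ∑ b ∈ Finset.Ioo 0 a, f a b) := by
  calc ∑ a ∈ Finset.Ioo 0 N, ∑ b ∈ Finset.Ioo 0 N, f a b
      = ∑ a ∈ Finset.Ioo 0 N,
          ((∑ b ∈ Finset.Ioo 0 a, f a b) + f a a + ∑ b ∈ Finset.Ioo a N, f a b) := by
        refine Finset.sum_congr rfl fun a ha => ?_
        obtain ⟨h1, h2⟩ := Finset.mem_Ioo.mp ha
        exact point_split h1 h2 _
    _ = (∑ a ∈ Finset.Ioo 0 N, ∑ b ∈ Finset.Ioo 0 a, f a b)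
        + (∑ a ∈ Finset.Ioo 0 N, f a a)
        + ∑ a ∈ Finset.Ioo 0 N, ∑ b ∈ Finset.Ioo a N, f a b := by
        rw [Finset.sum_add_distrib, Finset.sum_add_distrib]
    _ = _ := by rw [tri_swap]; abel

lemma odd_pow_sum (p k : ℕ) (hp : p.Prime) (hp2 : 2 < p) (hk : Odd k) :
    ∑ n ∈ Finset.Ioo 0 p, ((n : ZMod p) ^ k)⁻¹ = 0 := by
  haveI : Fact p.Prime := ⟨hp⟩
  have hk0 : k ≠ 0 := by rintro rfl; simp at hk
  have h0 : ∑ n ∈ Finset.Ioo 0 p, ((n : ZMod p) ^ k)⁻¹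
      = ∑ n ∈ Finset.range p, ((n : ZMod p) ^ k)⁻¹ := by
    refine Finset.sum_subset (fun x hx => Finset.mem_range.mpr (Finset.mem_Ioo.mp hx).2)
      (fun x hx hnx => ?_)
    have : x = 0 := by
      have := Finset.mem_range.mp hx
      simp only [Finset.mem_Ioo] at hnx; omega
    subst this; simp [zero_pow hk0]
  have h1 : ∑ n ∈ Finset.range p, ((n : ZMod p) ^ k)⁻¹
      = ∑ x : ZMod p, (x ^ k)⁻¹ := by
    refine Finset.sum_nbij' (fun n => (n : ZMod p)) (fun x => x.val) ?_ ?_ ?_ ?_ ?_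
    · intro a _; exact Finset.mem_univ _
    · intro x _; exact Finset.mem_range.mpr (ZMod.val_lt x)
    · intro a ha; exact ZMod.val_natCast_of_lt (Finset.mem_range.mp ha)
    · intro x _; simp [ZMod.natCast_val, ZMod.cast_id]
    · intro a _; rfl
  have hneg : ∑ x : ZMod p, (x ^ k)⁻¹ = -∑ x : ZMod p, (x ^ k)⁻¹ := by
    have := Fintype.sum_equiv (Equiv.neg (ZMod p)) (fun x => ((-x) ^ k)⁻¹)
      (fun x => (x ^ k)⁻¹) (fun x => rfl)
    calc ∑ x : ZMod p, (x ^ k)⁻¹ = ∑ x : ZMod p, ((-x) ^ k)⁻¹ := this.symm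
      _ = ∑ x : ZMod p, -((x ^ k)⁻¹) := by
          refine Finset.sum_congr rfl fun x _ => ?_
          rw [hk.neg_pow, inv_neg]
      _ = -∑ x : ZMod p, (x ^ k)⁻¹ := by rw [Finset.sum_neg_distrib]
  have h2 : (2 : ZMod p) ≠ 0 := by
    have hnd : ¬ (p ∣ 2) := fun h => absurd (Nat.le_of_dvd (by norm_num) h) (by omega)
    intro h
    exact hnd ((ZMod.natCast_eq_zero_iff 2 p).mp (by exact_mod_cast h))
  rw [h0, h1]
  have : (2 : ZMod p) * ∑ x : ZMod p, (x ^ k)⁻¹ = 0 := by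
    rw [two_mul]; nth_rewrite 1 [hneg]; ring
  rcases mul_eq_zero.mp this with h | h
  · exact absurd h h2
  · exact h

lemma lemXY (p : ℕ) (hp : p.Prime) (hp3 : 3 < p) :
    (∑ n2 ∈ Finset.Ioo 0 p, ∑ n1 ∈ Finset.Ioo 0 n2,
        ((n1 : ZMod p) * (n2 : ZMod p) ^ 2)⁻¹)
    + (∑ n2 ∈ Finset.Ioo 0 p, ∑ n1 ∈ Finset.Ioo 0 n2,
        ((n1 : ZMod p) ^ 2 * (n2 : ZMod p))⁻¹) = 0 := by
  haveI : Fact p.Prime := ⟨hp⟩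
  have hS1 : (∑ n ∈ Finset.Ioo 0 p, ((n : ZMod p))⁻¹) = 0 := by
    have h := odd_pow_sum p 1 hp (by omega) odd_one
    simpa using h
  have hS3 : (∑ n ∈ Finset.Ioo 0 p, ((n : ZMod p) ^ 3)⁻¹) = 0 :=
    odd_pow_sum p 3 hp (by omega) ⟨1, by norm_num⟩
  have key : (∑ n ∈ Finset.Ioo 0 p, ((n : ZMod p))⁻¹)
        * (∑ n ∈ Finset.Ioo 0 p, ((n : ZMod p) ^ 2)⁻¹)
      = (∑ n2 ∈ Finset.Ioo 0 p, ∑ n1 ∈ Finset.Ioo 0 n2,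
          ((n1 : ZMod p) * (n2 : ZMod p) ^ 2)⁻¹)
        + (∑ n ∈ Finset.Ioo 0 p, ((n : ZMod p) ^ 3)⁻¹)
        + (∑ n2 ∈ Finset.Ioo 0 p, ∑ n1 ∈ Finset.Ioo 0 n2,
          ((n1 : ZMod p) ^ 2 * (n2 : ZMod p))⁻¹) := by
    rw [Finset.sum_mul_sum,
      double_split p (fun a b => ((a : ZMod p))⁻¹ * (((b : ZMod p)) ^ 2)⁻¹)]
    congr 1
    · congr 1
      · exact Finset.sum_congr rfl fun b _ => Finset.sum_congr rfl fun a _ => by ring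
      · exact Finset.sum_congr rfl fun a _ => by ring
    · exact Finset.sum_congr rfl fun a _ => Finset.sum_congr rfl fun b _ => by ring
  linear_combination (-1 : ZMod p) * key
    + (∑ n ∈ Finset.Ioo 0 p, ((n : ZMod p) ^ 2)⁻¹) * hS1 - hS3

lemma lemZ (p : ℕ) (hp : p.Prime) (hp3 : 3 < p) :
    (∑ n3 ∈ Finset.Ioo 0 p, ∑ n2 ∈ Finset.Ioo 0 n3, ∑ n1 ∈ Finset.Ioo 0 n2,
        ((n1 : ZMod p) * (n2 : ZMod p) * (n3 : ZMod p))⁻¹) = 0 := by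
  haveI : Fact p.Prime := ⟨hp⟩
  have hS1 : (∑ n ∈ Finset.Ioo 0 p, ((n : ZMod p))⁻¹) = 0 := by
    have h := odd_pow_sum p 1 hp (by omega) odd_one
    simpa using h
  have hxy := lemXY p hp hp3
  -- abbreviations as proofs only; write everything explicitly
  have split5 : ∀ c ∈ Finset.Ioo 0 p, ∀ b ∈ Finset.Ioo 0 c,
      (∑ a ∈ Finset.Ioo 0 p, ((a : ZMod p))⁻¹ * (((b : ZMod p)) * ((c : ZMod p)))⁻¹)
      = (∑ a ∈ Finset.Ioo 0 b, ((a : ZMod p))⁻¹ * (((b : ZMod p)) * ((c : ZMod p)))⁻¹)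
        + (((b : ZMod p))⁻¹ * (((b : ZMod p)) * ((c : ZMod p)))⁻¹
        + ((∑ a ∈ Finset.Ioo b c, ((a : ZMod p))⁻¹ * (((b : ZMod p)) * ((c : ZMod p)))⁻¹)
        + (((c : ZMod p))⁻¹ * (((b : ZMod p)) * ((c : ZMod p)))⁻¹
        + (∑ a ∈ Finset.Ioo c p, ((a : ZMod p))⁻¹ * (((b : ZMod p)) * ((c : ZMod p)))⁻¹)))) := by
    intro c hc b hb
    simp only [Finset.mem_Ioo] at hc hb
    rw [point_split hb.1 (lt_trans hb.2 hc.2), point_split hb.2 hc.2]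
    abel
  have key : (∑ n ∈ Finset.Ioo 0 p, ((n : ZMod p))⁻¹)
        * (∑ c ∈ Finset.Ioo 0 p, ∑ b ∈ Finset.Ioo 0 c,
            (((b : ZMod p)) * ((c : ZMod p)))⁻¹)
      = 3 * (∑ n3 ∈ Finset.Ioo 0 p, ∑ n2 ∈ Finset.Ioo 0 n3, ∑ n1 ∈ Finset.Ioo 0 n2,
            ((n1 : ZMod p) * (n2 : ZMod p) * (n3 : ZMod p))⁻¹)
        + ((∑ n2 ∈ Finset.Ioo 0 p, ∑ n1 ∈ Finset.Ioo 0 n2,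
            ((n1 : ZMod p) * (n2 : ZMod p) ^ 2)⁻¹)
          + (∑ n2 ∈ Finset.Ioo 0 p, ∑ n1 ∈ Finset.Ioo 0 n2,
            ((n1 : ZMod p) ^ 2 * (n2 : ZMod p))⁻¹)) := by
    calc (∑ n ∈ Finset.Ioo 0 p, ((n : ZMod p))⁻¹)
        * (∑ c ∈ Finset.Ioo 0 p, ∑ b ∈ Finset.Ioo 0 c, (((b : ZMod p)) * ((c : ZMod p)))⁻¹)
        = ∑ a ∈ Finset.Ioo 0 p, ∑ c ∈ Finset.Ioo 0 p, ∑ b ∈ Finset.Ioo 0 c,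
            ((a : ZMod p))⁻¹ * (((b : ZMod p)) * ((c : ZMod p)))⁻¹ := by
          rw [Finset.sum_mul_sum]
          exact Finset.sum_congr rfl fun a _ => Finset.sum_congr rfl fun c _ =>
            Finset.mul_sum _ _ _
      _ = ∑ c ∈ Finset.Ioo 0 p, ∑ a ∈ Finset.Ioo 0 p, ∑ b ∈ Finset.Ioo 0 c,
            ((a : ZMod p))⁻¹ * (((b : ZMod p)) * ((c : ZMod p)))⁻¹ := Finset.sum_comm
      _ = ∑ c ∈ Finset.Ioo 0 p, ∑ b ∈ Finset.Ioo 0 c, ∑ a ∈ Finset.Ioo 0 p,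
            ((a : ZMod p))⁻¹ * (((b : ZMod p)) * ((c : ZMod p)))⁻¹ :=
          Finset.sum_congr rfl fun c _ => Finset.sum_comm
      _ = ∑ c ∈ Finset.Ioo 0 p, ∑ b ∈ Finset.Ioo 0 c,
            ((∑ a ∈ Finset.Ioo 0 b, ((a : ZMod p))⁻¹ * (((b : ZMod p)) * ((c : ZMod p)))⁻¹)
            + (((b : ZMod p))⁻¹ * (((b : ZMod p)) * ((c : ZMod p)))⁻¹
            + ((∑ a ∈ Finset.Ioo b c, ((a : ZMod p))⁻¹ * (((b : ZMod p)) * ((c : ZMod p)))⁻¹)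
            + (((c : ZMod p))⁻¹ * (((b : ZMod p)) * ((c : ZMod p)))⁻¹
            + (∑ a ∈ Finset.Ioo c p,
                ((a : ZMod p))⁻¹ * (((b : ZMod p)) * ((c : ZMod p)))⁻¹))))) :=
          Finset.sum_congr rfl fun c hc => Finset.sum_congr rfl fun b hb => split5 c hc b hb
      _ = (∑ c ∈ Finset.Ioo 0 p, ∑ b ∈ Finset.Ioo 0 c, ∑ a ∈ Finset.Ioo 0 b,
            ((a : ZMod p))⁻¹ * (((b : ZMod p)) * ((c : ZMod p)))⁻¹)
          + ((∑ c ∈ Finset.Ioo 0 p, ∑ b ∈ Finset.Ioo 0 c,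
            ((b : ZMod p))⁻¹ * (((b : ZMod p)) * ((c : ZMod p)))⁻¹)
          + ((∑ c ∈ Finset.Ioo 0 p, ∑ b ∈ Finset.Ioo 0 c, ∑ a ∈ Finset.Ioo b c,
            ((a : ZMod p))⁻¹ * (((b : ZMod p)) * ((c : ZMod p)))⁻¹)
          + ((∑ c ∈ Finset.Ioo 0 p, ∑ b ∈ Finset.Ioo 0 c,
            ((c : ZMod p))⁻¹ * (((b : ZMod p)) * ((c : ZMod p)))⁻¹)
          + (∑ c ∈ Finset.Ioo 0 p, ∑ b ∈ Finset.Ioo 0 c, ∑ a ∈ Finset.Ioo c p,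
            ((a : ZMod p))⁻¹ * (((b : ZMod p)) * ((c : ZMod p)))⁻¹)))) := by
          simp only [Finset.sum_add_distrib]
      _ = 3 * (∑ n3 ∈ Finset.Ioo 0 p, ∑ n2 ∈ Finset.Ioo 0 n3, ∑ n1 ∈ Finset.Ioo 0 n2,
            ((n1 : ZMod p) * (n2 : ZMod p) * (n3 : ZMod p))⁻¹)
          + ((∑ n2 ∈ Finset.Ioo 0 p, ∑ n1 ∈ Finset.Ioo 0 n2,
            ((n1 : ZMod p) * (n2 : ZMod p) ^ 2)⁻¹)
          + (∑ n2 ∈ Finset.Ioo 0 p, ∑ n1 ∈ Finset.Ioo 0 n2,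
            ((n1 : ZMod p) ^ 2 * (n2 : ZMod p))⁻¹)) := by
          have T1 : (∑ c ∈ Finset.Ioo 0 p, ∑ b ∈ Finset.Ioo 0 c, ∑ a ∈ Finset.Ioo 0 b,
              ((a : ZMod p))⁻¹ * (((b : ZMod p)) * ((c : ZMod p)))⁻¹)
              = ∑ n3 ∈ Finset.Ioo 0 p, ∑ n2 ∈ Finset.Ioo 0 n3, ∑ n1 ∈ Finset.Ioo 0 n2,
                ((n1 : ZMod p) * (n2 : ZMod p) * (n3 : ZMod p))⁻¹ :=
            Finset.sum_congr rfl fun c _ => Finset.sum_congr rfl fun b _ =>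
              Finset.sum_congr rfl fun a _ => by ring
          have T2 : (∑ c ∈ Finset.Ioo 0 p, ∑ b ∈ Finset.Ioo 0 c,
              ((b : ZMod p))⁻¹ * (((b : ZMod p)) * ((c : ZMod p)))⁻¹)
              = ∑ n2 ∈ Finset.Ioo 0 p, ∑ n1 ∈ Finset.Ioo 0 n2,
                ((n1 : ZMod p) ^ 2 * (n2 : ZMod p))⁻¹ :=
            Finset.sum_congr rfl fun c _ => Finset.sum_congr rfl fun b _ => by ring
          have T3 : (∑ c ∈ Finset.Ioo 0 p, ∑ b ∈ Finset.Ioo 0 c, ∑ a ∈ Finset.Ioo b c,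
              ((a : ZMod p))⁻¹ * (((b : ZMod p)) * ((c : ZMod p)))⁻¹)
              = ∑ n3 ∈ Finset.Ioo 0 p, ∑ n2 ∈ Finset.Ioo 0 n3, ∑ n1 ∈ Finset.Ioo 0 n2,
                ((n1 : ZMod p) * (n2 : ZMod p) * (n3 : ZMod p))⁻¹ := by
            refine Finset.sum_congr rfl fun c _ => ?_
            rw [tri_swap c (fun b a =>
              ((a : ZMod p))⁻¹ * (((b : ZMod p)) * ((c : ZMod p)))⁻¹)]
            exact Finset.sum_congr rfl fun a _ => Finset.sum_congr rfl fun b _ => by ring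
          have T4 : (∑ c ∈ Finset.Ioo 0 p, ∑ b ∈ Finset.Ioo 0 c,
              ((c : ZMod p))⁻¹ * (((b : ZMod p)) * ((c : ZMod p)))⁻¹)
              = ∑ n2 ∈ Finset.Ioo 0 p, ∑ n1 ∈ Finset.Ioo 0 n2,
                ((n1 : ZMod p) * (n2 : ZMod p) ^ 2)⁻¹ :=
            Finset.sum_congr rfl fun c _ => Finset.sum_congr rfl fun b _ => by ring
          have T5 : (∑ c ∈ Finset.Ioo 0 p, ∑ b ∈ Finset.Ioo 0 c, ∑ a ∈ Finset.Ioo c p,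
              ((a : ZMod p))⁻¹ * (((b : ZMod p)) * ((c : ZMod p)))⁻¹)
              = ∑ n3 ∈ Finset.Ioo 0 p, ∑ n2 ∈ Finset.Ioo 0 n3, ∑ n1 ∈ Finset.Ioo 0 n2,
                ((n1 : ZMod p) * (n2 : ZMod p) * (n3 : ZMod p))⁻¹ := by
            calc (∑ c ∈ Finset.Ioo 0 p, ∑ b ∈ Finset.Ioo 0 c, ∑ a ∈ Finset.Ioo c p,
                ((a : ZMod p))⁻¹ * (((b : ZMod p)) * ((c : ZMod p)))⁻¹)
                = ∑ c ∈ Finset.Ioo 0 p, ∑ a ∈ Finset.Ioo c p, ∑ b ∈ Finset.Ioo 0 c,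
                  ((a : ZMod p))⁻¹ * (((b : ZMod p)) * ((c : ZMod p)))⁻¹ :=
                Finset.sum_congr rfl fun c _ => Finset.sum_comm
              _ = ∑ a ∈ Finset.Ioo 0 p, ∑ c ∈ Finset.Ioo 0 a, ∑ b ∈ Finset.Ioo 0 c,
                  ((a : ZMod p))⁻¹ * (((b : ZMod p)) * ((c : ZMod p)))⁻¹ :=
                tri_swap p (fun c a => ∑ b ∈ Finset.Ioo 0 c,
                  ((a : ZMod p))⁻¹ * (((b : ZMod p)) * ((c : ZMod p)))⁻¹)
              _ = _ := Finset.sum_congr rfl fun a _ => Finset.sum_congr rfl fun c _ =>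
                  Finset.sum_congr rfl fun b _ => by ring
          rw [T1, T2, T3, T4, T5]; ring
  have h3 : (3 : ZMod p) ≠ 0 := by
    have hnd : ¬ (p ∣ 3) := fun h =>
      absurd (Nat.le_of_dvd (by norm_num) h) (by omega)
    intro h
    exact hnd ((ZMod.natCast_eq_zero_iff 3 p).mp (by exact_mod_cast h))
  have h3Z : (3 : ZMod p) * (∑ n3 ∈ Finset.Ioo 0 p, ∑ n2 ∈ Finset.Ioo 0 n3,
      ∑ n1 ∈ Finset.Ioo 0 n2,
      ((n1 : ZMod p) * (n2 : ZMod p) * (n3 : ZMod p))⁻¹) = 0 := by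
    linear_combination (-1 : ZMod p) * key
      + (∑ c ∈ Finset.Ioo 0 p, ∑ b ∈ Finset.Ioo 0 c,
          (((b : ZMod p)) * ((c : ZMod p)))⁻¹) * hS1 - hxy
  rcases mul_eq_zero.mp h3Z with h | h
  · exact absurd h h3
  · exact h

/-- Weight-3 case of Hoffman's duality in `ℤ/pℤ` for a prime `p > 3`:
`ζ_{<p}(3) ≡ −(ζ_{<p}(3) + ζ_{<p}(1,2) + ζ_{<p}(2,1) + ζ_{<p}(1,1,1)) (mod p)`. -/
theorem stmt_14 (p : ℕ) (hp : p.Prime) (hp3 : 3 < p) :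
    (∑ n ∈ Finset.Ioo 0 p, ((n : ZMod p) ^ 3)⁻¹) =
    -((∑ n ∈ Finset.Ioo 0 p, ((n : ZMod p) ^ 3)⁻¹) +
      (∑ n2 ∈ Finset.Ioo 0 p, ∑ n1 ∈ Finset.Ioo 0 n2,
        ((n1 : ZMod p) * (n2 : ZMod p) ^ 2)⁻¹) +
      (∑ n2 ∈ Finset.Ioo 0 p, ∑ n1 ∈ Finset.Ioo 0 n2,
        ((n1 : ZMod p) ^ 2 * (n2 : ZMod p))⁻¹) +
      (∑ n3 ∈ Finset.Ioo 0 p, ∑ n2 ∈ Finset.Ioo 0 n3, ∑ n1 ∈ Finset.Ioo 0 n2,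
        ((n1 : ZMod p) * (n2 : ZMod p) * (n3 : ZMod p))⁻¹)) := by
  have hS3 : (∑ n ∈ Finset.Ioo 0 p, ((n : ZMod p) ^ 3)⁻¹) = 0 :=
    odd_pow_sum p 3 hp (by omega) ⟨1, by norm_num⟩
  have hxy := lemXY p hp hp3
  have hz := lemZ p hp hp3
  linear_combination (2 : ZMod p) * hS3 + hxy + hz
end
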